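/- arXiv:1801.09127 — 4 statements merged into one kernel-verified Lean document; each statement's English description precedes it below -/
import Mathlib

section
/- A left R-module G is X-Gorenstein projective if and only if Ext^i_R(G,X) = 0 for all X ∈ X and all i > 0, and there exists an exact sequence 0 → G → P^0 → P^1 → ... with each P^i projective that remains exact after applying Hom_R(-,X) for every X ∈ X. -/
open CategoryTheory DirectSum

universe u

/-- An `𝒳`-complete projective resolution: a doubly infinite exact sequence of
projective `R`-modules that remains exact after applying `Hom_R(-, Y)`
for every `Y` in the class `𝒳`. -/
structure XCompleteResolution (R : Type u) [Ring R] (𝒳 : ModuleCat.{u} R → Prop) where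
  P : ℤ → ModuleCat.{u} R
  d : ∀ n : ℤ, P n →ₗ[R] P (n + 1)
  projective : ∀ n, Module.Projective R (P n)
  exact : ∀ n, Function.Exact (d n) (d (n + 1))
  homExact : ∀ (Y : ModuleCat.{u} R), 𝒳 Y → ∀ n : ℤ,
    Function.Exact (fun f : P (n + 1 + 1) →ₗ[R] Y => f ∘ₗ d (n + 1))
      (fun f : P (n + 1) →ₗ[R] Y => f ∘ₗ d n)

/-- `G` is `𝒳`-Gorenstein projective: it is a kernel in an `𝒳`-complete
projective resolution. -/
def XGorensteinProjective (R : Type u) [Ring R] (𝒳 : ModuleCat.{u} R → Prop)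
    (G : ModuleCat.{u} R) : Prop :=
  ∃ C : XCompleteResolution R 𝒳, Nonempty (G ≃ₗ[R] LinearMap.ker (C.d 0))

/-- `ResWithKernel R 𝒞 n K M` says that there is an exact sequence
`0 → K → G_{n-1} → ⋯ → G_0 → M → 0` in which every `G_i` belongs to the class `𝒞`. -/
def ResWithKernel (R : Type u) [Ring R] (𝒞 : ModuleCat.{u} R → Prop) :
    ℕ → ModuleCat.{u} R → ModuleCat.{u} R → Prop
  | 0, K, M => Nonempty (K ≃ₗ[R] M)
  | n + 1, K, M => ∃ (G L : ModuleCat.{u} R) (f : L →ₗ[R] G) (g : G →ₗ[R] M),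
      𝒞 G ∧ Function.Injective f ∧ Function.Surjective g ∧ Function.Exact f g ∧
      ResWithKernel R 𝒞 n K L

/-- The resolution dimension of `M` with respect to a class `𝒞` of modules:
the least length of a resolution of `M` by modules in `𝒞` (`⊤` if none exists). -/
noncomputable def relDim (R : Type u) [Ring R] (𝒞 : ModuleCat.{u} R → Prop)
    (M : ModuleCat.{u} R) : ℕ∞ :=
  sInf {n : ℕ∞ | ∃ m : ℕ, n = m ∧ ∃ K, 𝒞 K ∧ ResWithKernel R 𝒞 m K M}

/-- The `𝒳`-Gorenstein projective dimension of `M`. -/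
noncomputable def xGpd (R : Type u) [Ring R] (𝒳 : ModuleCat.{u} R → Prop)
    (M : ModuleCat.{u} R) : ℕ∞ :=
  relDim R (XGorensteinProjective R 𝒳) M

/-- The projective dimension of `M`. -/
noncomputable def pdim (R : Type u) [Ring R] (M : ModuleCat.{u} R) : ℕ∞ :=
  relDim R (fun N => Module.Projective R N) M

/-- The Gorenstein projective dimension of `M`:
the `𝒳`-Gorenstein projective dimension for `𝒳` the class of projective modules. -/
noncomputable def gpd (R : Type u) [Ring R] (M : ModuleCat.{u} R) : ℕ∞ :=
  xGpd R (fun N => Module.Projective R N) M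

/-!
A complete resolution `P` with `G ≅ ker (P 0 → P 1)` splits at `G` into a projective resolution
`⋯ → P (-2) → P (-1) → G` and a coresolution `0 → G → P 0 → P 1 → ⋯`. Exactness of
`Hom(P, Y)` in degrees `≤ -2` is the vanishing of `Ext^{>0}(G, Y)` computed from the left half.
Since `P (-1) → G` is onto and `Hom(-, Y)` is left exact, exactness in degrees `-1` and `0`
says exactly that `Hom(P 0, Y) → Hom(G, Y)` is onto and that `Hom(-, Y)` is exact at `Hom(P 0, Y)`
on the right half. Conversely, splicing any projective resolution of `G` with the given
coresolution produces a complete resolution.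
-/

universe v w

section HomExactness

variable {R : Type*} [Ring R] {M₁ M₂ M₃ P P' N : Type*}
  [AddCommGroup M₁] [AddCommGroup M₂] [AddCommGroup M₃] [AddCommGroup P] [AddCommGroup P']
  [AddCommGroup N] [Module R M₁] [Module R M₂] [Module R M₃] [Module R P] [Module R P']
  [Module R N]

lemma Function.Exact.exact_precomp_of_surjective {f : M₁ →ₗ[R] M₂} {g : M₂ →ₗ[R] M₃}
    (hfg : Function.Exact f g) (hg : Function.Surjective g) :
    Function.Exact (fun h : M₃ →ₗ[R] N => h ∘ₗ g) (fun h : M₂ →ₗ[R] N => h ∘ₗ f) := by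
  intro h
  refine ⟨fun hh => ?_, ?_⟩
  · refine ⟨(LinearMap.range f).liftQ h (LinearMap.range_le_ker_iff.mpr hh) ∘ₗ
      (hfg.linearEquivOfSurjective hg).symm.toLinearMap, ?_⟩
    ext x
    simp
  · rintro ⟨k, rfl⟩
    change (k ∘ₗ g) ∘ₗ f = 0
    rw [LinearMap.comp_assoc, hfg.linearMap_comp_eq_zero, LinearMap.comp_zero]

lemma LinearMap.comp_eq_zero_iff_of_surjective {ε : M₁ →ₗ[R] M₂} (hε : Function.Surjective ε)
    (g : M₂ →ₗ[R] N) : g ∘ₗ ε = 0 ↔ g = 0 := by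
  rw [← LinearMap.zero_comp ε, LinearMap.cancel_right hε]

lemma exact_precomp_comp_iff_of_surjective {ε : M₁ →ₗ[R] M₂} (hε : Function.Surjective ε)
    (ι : M₂ →ₗ[R] P) (d : P →ₗ[R] P') :
    Function.Exact (fun f : P' →ₗ[R] N => f ∘ₗ d) (fun f : P →ₗ[R] N => f ∘ₗ (ι ∘ₗ ε)) ↔
      Function.Exact (fun f : P' →ₗ[R] N => f ∘ₗ d) (fun f : P →ₗ[R] N => f ∘ₗ ι) :=
  forall_congr' fun g => by
    simp only [← LinearMap.comp_assoc, LinearMap.comp_eq_zero_iff_of_surjective hε]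

lemma exact_precomp_comp_iff_surjective_precomp {δ : M₁ →ₗ[R] M₂} {ε : M₂ →ₗ[R] M₃}
    (hδε : Function.Exact δ ε) (hε : Function.Surjective ε) (ι : M₃ →ₗ[R] P) :
    Function.Exact (fun f : P →ₗ[R] N => f ∘ₗ (ι ∘ₗ ε)) (fun g : M₂ →ₗ[R] N => g ∘ₗ δ) ↔
      Function.Surjective (fun f : P →ₗ[R] N => f ∘ₗ ι) := by
  have hHom := hδε.exact_precomp_of_surjective (N := N) hε
  constructor
  · intro h k
    obtain ⟨f, hf⟩ := (h (k ∘ₗ ε)).mp ((hHom _).mpr ⟨k, rfl⟩)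
    exact ⟨f, (LinearMap.cancel_right hε).mp hf⟩
  · intro h g
    rw [hHom g]
    refine ⟨fun ⟨k, hk⟩ => ?_, fun ⟨f, hf⟩ => ⟨f ∘ₗ ι, hf⟩⟩
    obtain ⟨f, rfl⟩ := h k
    exact ⟨f, hk⟩

end HomExactness

namespace CategoryTheory.ProjectiveResolution

variable {R : Type w} [Ring R] {G : ModuleCat.{v} R}

lemma surjective_π_f_zero (P : ProjectiveResolution G) : Function.Surjective (P.π.f 0).hom :=
  (ModuleCat.epi_iff_surjective _).mp inferInstance

lemma exact_d_one_zero_π_f_zero (P : ProjectiveResolution G) :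
    Function.Exact (P.complex.d 1 0).hom (P.π.f 0).hom :=
  (ShortComplex.ShortExact.moduleCat_exact_iff_function_exact _).mp
    ((ShortComplex.mk _ _ P.complex_d_comp_π_f_zero).exact_of_g_is_cokernel
      P.isColimitCokernelCofork)

lemma exact_d_succ (P : ProjectiveResolution G) (n : ℕ) :
    Function.Exact (P.complex.d (n + 2) (n + 1)).hom (P.complex.d (n + 1) n).hom :=
  (ShortComplex.ShortExact.moduleCat_exact_iff_function_exact _).mp (P.exact_succ n)

lemma subsingleton_ext_succ_iff [Small.{v} R] (P : ProjectiveResolution G) (i : ℕ)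
    (Y : ModuleCat.{v} R) :
    Subsingleton (((Ext ℤ (ModuleCat.{v} R) (i + 1)).obj (Opposite.op G)).obj Y) ↔
      Function.Exact (fun f : P.complex.X i →ₗ[R] Y => f ∘ₗ (P.complex.d (i + 1) i).hom)
        (fun f : P.complex.X (i + 1) →ₗ[R] Y => f ∘ₗ (P.complex.d (i + 2) (i + 1)).hom) := by
  rw [← ModuleCat.isZero_iff_subsingleton, (P.isoExt (i + 1) Y).isZero_iff,
    ← HomologicalComplex.exactAt_iff_isZero_homology,
    HomologicalComplex.exactAt_iff' _ i (i + 1) (i + 2) (by simp) (by simp),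
    ShortComplex.ShortExact.moduleCat_exact_iff_function_exact]
  exact (Function.Exact.iff_of_ladder_addEquiv ModuleCat.homAddEquiv ModuleCat.homAddEquiv
    ModuleCat.homAddEquiv (f₁₂ := Preadditive.leftComp Y (P.complex.d (i + 1) i))
    (f₂₃ := Preadditive.leftComp Y (P.complex.d (i + 2) (i + 1)))
    (g₁₂ := AddMonoidHom.mk' (· ∘ₗ (P.complex.d (i + 1) i).hom) fun _ _ => LinearMap.add_comp ..)
    (g₂₃ := AddMonoidHom.mk' (· ∘ₗ (P.complex.d (i + 2) (i + 1)).hom)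
      fun _ _ => LinearMap.add_comp ..) rfl rfl).symm

noncomputable def ofExact (Q : ℕ → ModuleCat.{v} R) (δ : ∀ n, Q (n + 1) →ₗ[R] Q n)
    (ε : Q 0 →ₗ[R] G) (hQ : ∀ n, Module.Projective R (Q n)) (hε : Function.Surjective ε)
    (hδε : Function.Exact (δ 0) ε) (hδ : ∀ n, Function.Exact (δ (n + 1)) (δ n)) :
    ProjectiveResolution G where
  complex := ChainComplex.of Q (fun n => ModuleCat.ofHom (δ n)) fun n => by
    ext x
    exact (hδ n).apply_apply_eq_zero x
  projective n := ModuleCat.projective_of_categoryTheory_projective (Q n)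
  π := (ChainComplex.toSingle₀Equiv _ _).symm ⟨ModuleCat.ofHom ε, by
    change ChainComplex.of.d Q _ (0 + 1) 0 ≫ _ = 0
    rw [ChainComplex.of_d]
    ext x
    exact hδε.apply_apply_eq_zero x⟩
  quasiIso := ⟨fun n => by
    cases n with
    | zero =>
      rw [ChainComplex.quasiIsoAt₀_iff, ShortComplex.quasiIso_iff_of_zeros' _ rfl rfl rfl]
      refine ⟨?_, (ModuleCat.epi_iff_surjective _).mpr hε⟩
      rw [ShortComplex.ShortExact.moduleCat_exact_iff_function_exact]
      exact hδε
    | succ n =>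
      rw [quasiIsoAt_iff_exactAt' _ _ (ChainComplex.exactAt_succ_single_obj _ _),
        HomologicalComplex.exactAt_iff' _ (n + 2) (n + 1) n (by simp) (by simp),
        ShortComplex.ShortExact.moduleCat_exact_iff_function_exact]
      change Function.Exact (ChainComplex.of.d Q _ (n + 1 + 1) (n + 1)).hom
        (ChainComplex.of.d Q _ (n + 1) n).hom
      rw [ChainComplex.of_d, ChainComplex.of_d]
      exact hδ n⟩

@[simp]
lemma ofExact_complex_d (Q : ℕ → ModuleCat.{v} R) (δ : ∀ n, Q (n + 1) →ₗ[R] Q n)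
    (ε : Q 0 →ₗ[R] G) (hQ : ∀ n, Module.Projective R (Q n)) (hε : Function.Surjective ε)
    (hδε : Function.Exact (δ 0) ε) (hδ : ∀ n, Function.Exact (δ (n + 1)) (δ n)) (n : ℕ) :
    (ofExact Q δ ε hQ hε hδε hδ).complex.d (n + 1) n = ModuleCat.ofHom (δ n) :=
  ChainComplex.of_d Q (fun n => ModuleCat.ofHom (δ n)) n

end CategoryTheory.ProjectiveResolution

namespace XCompleteResolution

variable {R : Type u} [Ring R] {𝒳 : ModuleCat.{u} R → Prop} (C : XCompleteResolution R 𝒳)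
  {G : ModuleCat.{u} R} (e : G ≃ₗ[R] LinearMap.ker (C.d 0))

noncomputable def coaugmentation : G →ₗ[R] C.P 0 := (LinearMap.ker (C.d 0)).subtype ∘ₗ e.toLinearMap

noncomputable def augmentation : C.P (Int.negSucc 0) →ₗ[R] G :=
  e.symm.toLinearMap ∘ₗ (C.d (Int.negSucc 0)).codRestrict (LinearMap.ker (C.d 0))
    fun x => LinearMap.mem_ker.mpr ((C.exact (Int.negSucc 0)).apply_apply_eq_zero x)

lemma coaugmentation_injective : Function.Injective (C.coaugmentation e) :=
  (LinearMap.ker (C.d 0)).injective_subtype.comp e.injective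

lemma exact_coaugmentation : Function.Exact (C.coaugmentation e) (C.d 0) :=
  LinearEquiv.precomp_exact_iff_exact.mpr (LinearMap.exact_subtype_ker_map _)

lemma augmentation_surjective : Function.Surjective (C.augmentation e) := by
  refine e.symm.surjective.comp ?_
  rintro ⟨y, hy⟩
  obtain ⟨x, rfl⟩ := (C.exact (Int.negSucc 0) y).mp hy
  exact ⟨x, rfl⟩

lemma exact_augmentation : Function.Exact (C.d (Int.negSucc 1)) (C.augmentation e) := by
  rw [augmentation, LinearEquiv.postcomp_exact_iff_exact,
    ← (LinearMap.ker (C.d 0)).injective_subtype.comp_exact_iff_exact,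
    LinearMap.subtype_comp_codRestrict]
  exact C.exact _

lemma coaugmentation_comp_augmentation :
    C.coaugmentation e ∘ₗ C.augmentation e = C.d (Int.negSucc 0) := by
  ext x
  simp [coaugmentation, augmentation]

noncomputable def leftResolution : ProjectiveResolution G :=
  .ofExact (fun k => C.P (Int.negSucc k)) (fun k => C.d (Int.negSucc (k + 1)))
    (C.augmentation e) (fun _ => C.projective _) (C.augmentation_surjective e)
    (C.exact_augmentation e) fun k => C.exact (Int.negSucc (k + 2))

lemma surjective_precomp_coaugmentation {Y : ModuleCat.{u} R} (hY : 𝒳 Y) :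
    Function.Surjective (fun f : C.P 0 →ₗ[R] Y => f ∘ₗ C.coaugmentation e) := by
  rw [← exact_precomp_comp_iff_surjective_precomp (C.exact_augmentation e)
    (C.augmentation_surjective e), coaugmentation_comp_augmentation]
  exact C.homExact Y hY (Int.negSucc 1)

lemma exact_precomp_coaugmentation {Y : ModuleCat.{u} R} (hY : 𝒳 Y) :
    Function.Exact (fun f : C.P 1 →ₗ[R] Y => f ∘ₗ C.d 0)
      (fun f : C.P 0 →ₗ[R] Y => f ∘ₗ C.coaugmentation e) := by
  rw [← exact_precomp_comp_iff_of_surjective (C.augmentation_surjective e),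
    coaugmentation_comp_augmentation]
  exact C.homExact Y hY (Int.negSucc 0)

end XCompleteResolution

lemma XGorensteinProjective.subsingleton_ext_succ {R : Type u} [Ring R]
    {𝒳 : ModuleCat.{u} R → Prop} {G : ModuleCat.{u} R} (hG : XGorensteinProjective R 𝒳 G)
    {Y : ModuleCat.{u} R} (hY : 𝒳 Y) (i : ℕ) :
    Subsingleton (((Ext ℤ (ModuleCat.{u} R) (i + 1)).obj (Opposite.op G)).obj Y) := by
  obtain ⟨C, ⟨e⟩⟩ := hG
  rw [(C.leftResolution e).subsingleton_ext_succ_iff, XCompleteResolution.leftResolution,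
    ProjectiveResolution.ofExact_complex_d, ProjectiveResolution.ofExact_complex_d]
  exact C.homExact Y hY (Int.negSucc (i + 2))

namespace CategoryTheory.ProjectiveResolution

variable {R : Type u} [Ring R] {G : ModuleCat.{u} R} (P : ProjectiveResolution G)
  (Q : ℕ → ModuleCat.{u} R) (ι : G →ₗ[R] Q 0) (d : ∀ n, Q n →ₗ[R] Q (n + 1))

/-- `Q k` sits in degree `k` and `P.complex.X k` in degree `-(k + 1)`. -/
def splice : ℤ → ModuleCat.{u} R
  | .ofNat k => Q k
  | .negSucc k => P.complex.X k

noncomputable def spliceD : ∀ n : ℤ, P.splice Q n →ₗ[R] P.splice Q (n + 1)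
  | .ofNat k => d k
  | .negSucc 0 => ι ∘ₗ (P.π.f 0).hom
  | .negSucc (k + 1) => (P.complex.d (k + 1) k).hom

variable {Q ι d}

lemma projective_splice (hQ : ∀ n, Module.Projective R (Q n)) :
    ∀ n, Module.Projective R (P.splice Q n)
  | .ofNat k => hQ k
  | .negSucc k => inferInstanceAs (Module.Projective R (P.complex.X k))

lemma exact_spliceD (hι : Function.Injective ι) (hιd : Function.Exact ι (d 0))
    (hd : ∀ n, Function.Exact (d n) (d (n + 1))) :
    ∀ n, Function.Exact (P.spliceD Q ι d n) (P.spliceD Q ι d (n + 1))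
  | .ofNat k => hd k
  | .negSucc 0 => P.surjective_π_f_zero.comp_exact_iff_exact.mpr hιd
  | .negSucc 1 => hι.comp_exact_iff_exact.mpr P.exact_d_one_zero_π_f_zero
  | .negSucc (k + 2) => P.exact_d_succ k

lemma homExact_spliceD {Y : ModuleCat.{u} R}
    (hext : ∀ i, Subsingleton (((Ext ℤ (ModuleCat.{u} R) (i + 1)).obj (Opposite.op G)).obj Y))
    (hsurj : Function.Surjective (fun f : Q 0 →ₗ[R] Y => f ∘ₗ ι))
    (hexact₀ : Function.Exact (fun f : Q 1 →ₗ[R] Y => f ∘ₗ d 0) (fun f : Q 0 →ₗ[R] Y => f ∘ₗ ι))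
    (hexact : ∀ n, Function.Exact (fun f : Q (n + 1 + 1) →ₗ[R] Y => f ∘ₗ d (n + 1))
      (fun f : Q (n + 1) →ₗ[R] Y => f ∘ₗ d n)) :
    ∀ n : ℤ, Function.Exact
      (fun f : P.splice Q (n + 1 + 1) →ₗ[R] Y => f ∘ₗ P.spliceD Q ι d (n + 1))
      (fun f : P.splice Q (n + 1) →ₗ[R] Y => f ∘ₗ P.spliceD Q ι d n)
  | .ofNat k => hexact k
  | .negSucc 0 => (exact_precomp_comp_iff_of_surjective P.surjective_π_f_zero ι (d 0)).mpr hexact₀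
  | .negSucc 1 =>
    (exact_precomp_comp_iff_surjective_precomp P.exact_d_one_zero_π_f_zero
      P.surjective_π_f_zero ι).mpr hsurj
  | .negSucc (k + 2) => (P.subsingleton_ext_succ_iff k Y).mp (hext k)

end CategoryTheory.ProjectiveResolution

theorem xGorensteinProjective_iff_ext_vanishing_and_right_resolution_general
    (R : Type u) [Ring R] (𝒳 : ModuleCat.{u} R → Prop)
    (G : ModuleCat.{u} R) :
    XGorensteinProjective R 𝒳 G ↔
      ((∀ (i : ℕ), 0 < i → ∀ Y : ModuleCat.{u} R, 𝒳 Y →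
          Subsingleton (((Ext ℤ (ModuleCat.{u} R) i).obj (Opposite.op G)).obj Y)) ∧
        ∃ (P : ℕ → ModuleCat.{u} R) (ι : G →ₗ[R] P 0) (d : ∀ n, P n →ₗ[R] P (n + 1)),
          (∀ n, Module.Projective R (P n)) ∧
          Function.Injective ι ∧ Function.Exact ι (d 0) ∧
          (∀ n, Function.Exact (d n) (d (n + 1))) ∧
          (∀ Y : ModuleCat.{u} R, 𝒳 Y →
            (Function.Surjective (fun f : P 0 →ₗ[R] Y => f ∘ₗ ι)) ∧
            Function.Exact (fun f : P 1 →ₗ[R] Y => f ∘ₗ d 0)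
              (fun f : P 0 →ₗ[R] Y => f ∘ₗ ι) ∧
            ∀ n, Function.Exact (fun f : P (n + 1 + 1) →ₗ[R] Y => f ∘ₗ d (n + 1))
              (fun f : P (n + 1) →ₗ[R] Y => f ∘ₗ d n))) := by
  constructor
  · intro hG
    refine ⟨fun i hi Y hY => ?_, ?_⟩
    · obtain ⟨j, rfl⟩ := Nat.exists_eq_succ_of_ne_zero hi.ne'
      exact hG.subsingleton_ext_succ hY j
    · obtain ⟨C, ⟨e⟩⟩ := hG
      exact ⟨fun n => C.P n, C.coaugmentation e, fun n => C.d n, fun n => C.projective n,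
        C.coaugmentation_injective e, C.exact_coaugmentation e, fun n => C.exact n,
        fun Y hY => ⟨C.surjective_precomp_coaugmentation e hY,
          C.exact_precomp_coaugmentation e hY, fun n => C.homExact Y hY n⟩⟩
  · rintro ⟨hext, Q, ι, d, hQ, hι, hιd, hd, hhom⟩
    let P := projectiveResolution G
    refine ⟨⟨P.splice Q, P.spliceD Q ι d, P.projective_splice hQ, P.exact_spliceD hι hιd hd,
      fun Y hY => P.homExact_spliceD (fun i => hext (i + 1) i.succ_pos Y hY) (hhom Y hY).1
        (hhom Y hY).2.1 (hhom Y hY).2.2⟩, ⟨?_⟩⟩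
    exact (LinearEquiv.ofInjective ι hι).trans (LinearEquiv.ofEq _ _ hιd.linearMap_ker_eq.symm)

/-- `G` is `𝒳`-Gorenstein projective iff `Ext^i_R(G, Y) = 0` for every `Y ∈ 𝒳` and
every `i > 0`, and `G` admits a right projective resolution
`0 → G → P^0 → P^1 → ⋯` which stays exact after applying `Hom_R(-, Y)` for `Y ∈ 𝒳`. -/
theorem xGorensteinProjective_iff_ext_vanishing_and_right_resolution
    (R : Type u) [Ring R] (𝒳 : ModuleCat.{u} R → Prop)
    (h𝒳 : ∀ P : ModuleCat.{u} R, Module.Projective R P → 𝒳 P)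
    (G : ModuleCat.{u} R) :
    XGorensteinProjective R 𝒳 G ↔
      ((∀ (i : ℕ), 0 < i → ∀ Y : ModuleCat.{u} R, 𝒳 Y →
          Subsingleton (((Ext ℤ (ModuleCat.{u} R) i).obj (Opposite.op G)).obj Y)) ∧
        ∃ (P : ℕ → ModuleCat.{u} R) (ι : G →ₗ[R] P 0) (d : ∀ n, P n →ₗ[R] P (n + 1)),
          (∀ n, Module.Projective R (P n)) ∧
          Function.Injective ι ∧ Function.Exact ι (d 0) ∧
          (∀ n, Function.Exact (d n) (d (n + 1))) ∧
          (∀ Y : ModuleCat.{u} R, 𝒳 Y →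
            (Function.Surjective (fun f : P 0 →ₗ[R] Y => f ∘ₗ ι)) ∧
            Function.Exact (fun f : P 1 →ₗ[R] Y => f ∘ₗ d 0)
              (fun f : P 0 →ₗ[R] Y => f ∘ₗ ι) ∧
            ∀ n, Function.Exact (fun f : P (n + 1 + 1) →ₗ[R] Y => f ∘ₗ d (n + 1))
              (fun f : P (n + 1) →ₗ[R] Y => f ∘ₗ d n))) :=
  xGorensteinProjective_iff_ext_vanishing_and_right_resolution_general R 𝒳 G
end

section
/- If G is an X-Gorenstein projective R-module, then G admits an X-complete projective resolution F := ... → F_1 → F_0 → F^0 → F^1 → ... in which all modules F_i and F^i are free, with G ≅ Im(F_0 → F^0). -/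
open CategoryTheory DirectSum

universe u

/-!
Let `C` be a complete resolution with `G ≅ ker d₀ = im d₋₁`. By the Eilenberg swindle every
projective `P` has a free `T` with `P ⊕ T` free: if `K ⊕ P` is free, take `T = (K ⊕ P)^(ℕ)`.
Adding to `C` the disks `T_n = T_n`, arranged so that `T_n` lands in degree `n`
and no disk straddles `d₋₁`, makes every term free, keeps `im d₋₁`, and preserves exactness and
`Hom(-, X)`-exactness, since a disk stays exact under `Hom(-, Y)` for every `Y`.
-/

universe v w

noncomputable def DirectSum.constProdLEquiv (R ι M N : Type*) [Ring R] [AddCommGroup M]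
    [AddCommGroup N] [Module R M] [Module R N] :
    (⨁ _ : ι, M × N) ≃ₗ[R] (⨁ _ : ι, M) × (⨁ _ : ι, N) :=
  LinearEquiv.ofLinearMap
    ((lmap fun _ => LinearMap.fst R M N).prod (lmap fun _ => LinearMap.snd R M N))
    ((lmap fun _ => LinearMap.inl R M N).coprod (lmap fun _ => LinearMap.inr R M N))
    (by ext <;> simp) (by ext <;> simp)

noncomputable def DirectSum.prodConstNatLEquiv (R M : Type*) [Ring R] [AddCommGroup M]
    [Module R M] : (M × ⨁ _ : ℕ, M) ≃ₗ[R] ⨁ _ : ℕ, M :=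
  (lequivProdDirectSum R (α := fun _ : Option ℕ => M)).symm ≪≫ₗ
    lequivCongrLeft R (Denumerable.eqv (Option ℕ))

noncomputable def LinearMap.rangeProdMapEquivOfEqZero {R M N M' N' : Type*} [Ring R]
    [AddCommGroup M] [AddCommGroup N] [AddCommGroup M'] [AddCommGroup N'] [Module R M]
    [Module R N] [Module R M'] [Module R N'] (f : M →ₗ[R] N) (g : M' →ₗ[R] N') (hg : g = 0) :
    LinearMap.range (f.prodMap g) ≃ₗ[R] LinearMap.range f :=
  LinearEquiv.ofEq _ _ (by rw [LinearMap.range_prodMap, hg, LinearMap.range_zero,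
      ← Submodule.map_inl]) ≪≫ₗ
    (Submodule.equivMapOfInjective _ LinearMap.inl_injective _).symm

section Swindle

variable {R : Type u} [Ring R]

theorem Module.Projective.exists_complement_free {P : Type v} [AddCommGroup P] [Module R P]
    [Module.Projective R P] :
    ∃ (K : Type (max u v)) (_ : AddCommGroup K) (_ : Module R K), Module.Free R (K × P) := by
  obtain ⟨s, hs⟩ := Module.projective_def'.mp ‹Module.Projective R P›
  have hexact := LinearMap.exact_subtype_ker_map (Finsupp.linearCombination R (id : P → P))
  exact ⟨_, _, _, .of_equiv (σ := RingHom.id R)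
    (hexact.splitSurjectiveEquiv (Submodule.injective_subtype _) ⟨s, hs⟩).1⟩

theorem Module.Free.exists_free_prod_free_of_free_prod {M : Type v} {N : Type w}
    [AddCommGroup M] [AddCommGroup N] [Module R M] [Module R N] [Module.Free R (N × M)] :
    ∃ T : ModuleCat.{max w v} R, Module.Free R T ∧ Module.Free R (M × T) := by
  refine ⟨.of R (⨁ _ : ℕ, N × M), inferInstanceAs (Module.Free R (⨁ _ : ℕ, N × M)),
    .of_equiv (M := ⨁ _ : ℕ, N × M) (σ := RingHom.id R) ?_⟩
  -- `(N ⊕ M)^(ℕ) ≅ N^(ℕ) ⊕ (M ⊕ M^(ℕ)) ≅ M ⊕ (N^(ℕ) ⊕ M^(ℕ)) ≅ M ⊕ (N ⊕ M)^(ℕ)`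
  exact constProdLEquiv R ℕ N M ≪≫ₗ
    (LinearEquiv.prodCongr (LinearEquiv.refl R _) (prodConstNatLEquiv R M)).symm ≪≫ₗ
    (LinearEquiv.prodAssoc R _ _ _).symm ≪≫ₗ
    LinearEquiv.prodCongr (LinearEquiv.prodComm R _ _) (LinearEquiv.refl R _) ≪≫ₗ
    LinearEquiv.prodAssoc R _ _ _ ≪≫ₗ
    (LinearEquiv.prodCongr (LinearEquiv.refl R _) (constProdLEquiv R ℕ N M)).symm

theorem Module.Projective.exists_free_prod_free {P : Type v} [AddCommGroup P] [Module R P]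
    [Module.Projective R P] :
    ∃ T : ModuleCat.{max u v} R, Module.Free R T ∧ Module.Free R (P × T) := by
  obtain ⟨K, _, _, _⟩ := Module.Projective.exists_complement_free (R := R) (P := P)
  exact Module.Free.exists_free_prod_free_of_free_prod (N := K)

end Swindle

section ExactProdMap

variable {R : Type u} [Ring R] {M₁ M₂ M₃ N₁ N₂ N₃ Y : Type*} [AddCommGroup M₁] [AddCommGroup M₂]
  [AddCommGroup M₃] [AddCommGroup N₁] [AddCommGroup N₂] [AddCommGroup N₃] [AddCommGroup Y]
  [Module R M₁] [Module R M₂] [Module R M₃] [Module R N₁] [Module R N₂] [Module R N₃] [Module R Y]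
  {f : M₁ →ₗ[R] M₂} {g : M₂ →ₗ[R] M₃} {f' : N₁ →ₗ[R] N₂} {g' : N₂ →ₗ[R] N₃}

theorem Function.Exact.prodMap (h : Function.Exact f g) (h' : Function.Exact f' g') :
    Function.Exact (f.prodMap f') (g.prodMap g') := by
  rintro ⟨y, y'⟩
  simp [Prod.ext_iff, h y, h' y']

theorem Function.Exact.precomp_prodMap
    (h : Function.Exact (fun φ : M₃ →ₗ[R] Y => φ ∘ₗ g) (fun φ : M₂ →ₗ[R] Y => φ ∘ₗ f))
    (h' : Function.Exact (fun φ : N₃ →ₗ[R] Y => φ ∘ₗ g') (fun φ : N₂ →ₗ[R] Y => φ ∘ₗ f')) :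
    Function.Exact (fun φ : M₃ × N₃ →ₗ[R] Y => φ ∘ₗ g.prodMap g')
      (fun φ : M₂ × N₂ →ₗ[R] Y => φ ∘ₗ f.prodMap f') := by
  intro φ
  constructor
  · intro hφ
    obtain ⟨ψ, hψ⟩ := (h (φ ∘ₗ LinearMap.inl R M₂ N₂)).mp <| by
      ext x; simpa using LinearMap.congr_fun hφ (x, 0)
    obtain ⟨ψ', hψ'⟩ := (h' (φ ∘ₗ LinearMap.inr R M₂ N₂)).mp <| by
      ext x; simpa using LinearMap.congr_fun hφ (0, x)
    refine ⟨ψ.coprod ψ', LinearMap.prod_ext ?_ ?_⟩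
    · ext x; simpa using LinearMap.congr_fun hψ x
    · ext x; simpa using LinearMap.congr_fun hψ' x
  · rintro ⟨ψ, rfl⟩
    have hgf := (h _).mpr ⟨ψ ∘ₗ LinearMap.inl R M₃ N₃, rfl⟩
    have hgf' := (h' _).mpr ⟨ψ ∘ₗ LinearMap.inr R M₃ N₃, rfl⟩
    refine LinearMap.prod_ext ?_ ?_
    · ext x; simpa using LinearMap.congr_fun hgf x
    · ext x; simpa using LinearMap.congr_fun hgf' x

end ExactProdMap

namespace XCompleteResolution

variable {R : Type u} [Ring R] {𝒳 : ModuleCat.{u} R → Prop}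

def prod (C D : XCompleteResolution R 𝒳) : XCompleteResolution R 𝒳 where
  P n := .of R (C.P n × D.P n)
  d n := (C.d n).prodMap (D.d n)
  projective n := have := C.projective n; have := D.projective n; inferInstance
  exact n := (C.exact n).prodMap (D.exact n)
  homExact Y hY n := (C.homExact Y hY n).precomp_prodMap (D.homExact Y hY n)

section Disk

variable (A : ℤ → ModuleCat.{u} R)

def diskShift (n : ℤ) : A n ≃ₗ[R] A (n + 1 - 1) :=
  (eqToIso (congrArg A (add_sub_cancel_right n 1).symm)).toLinearEquiv

/-- The direct sum over `n` of the disks `A n = A n` placed in degrees `n` and `n + 1`. -/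
def disk (hA : ∀ n, Module.Projective R (A n)) : XCompleteResolution R 𝒳 where
  P n := .of R (A n × A (n - 1))
  d n := LinearMap.inr R _ _ ∘ₗ (diskShift A n).toLinearMap ∘ₗ LinearMap.fst R _ _
  projective n := have := hA n; have := hA (n - 1); inferInstance
  exact n := by
    rintro ⟨a, b⟩
    constructor
    · intro h
      have ha : a = 0 := by simpa using h
      exact ⟨((diskShift A n).symm b, 0), by simp [ha]⟩
    · rintro ⟨x, hx⟩
      rw [← hx]
      simp
  homExact Y _ n := by
    intro φ
    constructor
    · intro hφ
      have hφ_inr : ∀ b, φ (0, b) = 0 := fun b => by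
        simpa using LinearMap.congr_fun hφ ((diskShift A n).symm b, 0)
      refine ⟨φ ∘ₗ LinearMap.inl R _ _ ∘ₗ (diskShift A (n + 1)).symm.toLinearMap ∘ₗ
        LinearMap.snd R _ _, ?_⟩
      ext a
      · simp
      · simp [hφ_inr]
    · rintro ⟨ψ, rfl⟩
      ext x <;> simp [← Prod.zero_eq_mk]

theorem disk_d_eq_zero (hA : ∀ n, Module.Projective R (A n)) (n : ℤ) [Subsingleton (A n)] :
    (disk (𝒳 := 𝒳) A hA).d n = 0 := by
  change LinearMap.inr R _ _ ∘ₗ (diskShift A n).toLinearMap ∘ₗ LinearMap.fst R _ _ = 0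
  rw [Subsingleton.elim (LinearMap.fst R (A n) (A (n - 1))) 0, LinearMap.comp_zero,
    LinearMap.comp_zero]

end Disk

end XCompleteResolution

section DiskFamily

variable {R : Type u} [Ring R]

/-- `T n` is put in position `n` for `n ≥ 0` and in position `n - 1` for `n < 0`, with `0` at
`-1`: the disk complex on this family then has `T n` in degree `n`, and is zero across `d₋₁`. -/
def diskFamily (T : ℤ → ModuleCat.{u} R) : ℤ → ModuleCat.{u} R
  | .ofNat k => T k
  | .negSucc 0 => .of R PUnit.{u + 1}
  | .negSucc (k + 1) => T (.negSucc k)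

theorem free_diskFamily (T : ℤ → ModuleCat.{u} R) (hT : ∀ n, Module.Free R (T n)) :
    ∀ n, Module.Free R (diskFamily T n)
  | .ofNat k => hT k
  | .negSucc 0 => inferInstanceAs (Module.Free R PUnit.{u + 1})
  | .negSucc (_ + 1) => hT _

theorem free_prod_diskFamily (T P : ℤ → ModuleCat.{u} R) (hT : ∀ n, Module.Free R (T n))
    (hPT : ∀ n, Module.Free R (P n × T n)) :
    ∀ n, Module.Free R (P n × (diskFamily T n × diskFamily T (n - 1)))
  | .ofNat k =>
    have := hPT k; have := free_diskFamily T hT (k - 1)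
    .of_equiv (σ := RingHom.id R) (LinearEquiv.prodAssoc R (P k) (T k) _)
  | .negSucc k =>
    have := hPT (.negSucc k); have := free_diskFamily T hT (.negSucc k)
    .of_equiv (σ := RingHom.id R) <| LinearEquiv.prodAssoc R _ _ _ ≪≫ₗ
      LinearEquiv.prodCongr (LinearEquiv.refl R _) (LinearEquiv.prodComm R (T (.negSucc k)) _)

end DiskFamily

open XCompleteResolution in
theorem xGorensteinProjective_exists_free_complete_resolution_general
    (R : Type u) [Ring R] (𝒳 : ModuleCat.{u} R → Prop)
    (G : ModuleCat.{u} R) (hG : XGorensteinProjective R 𝒳 G) :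
    ∃ C : XCompleteResolution R 𝒳, (∀ n, Module.Free R (C.P n)) ∧
      Nonempty (G ≃ₗ[R] LinearMap.range (C.d (-1))) := by
  obtain ⟨C, ⟨e⟩⟩ := hG
  choose T hT hPT using fun n => (C.projective n).exists_free_prod_free
  have hA n : Module.Projective R (diskFamily T n) :=
    have := free_diskFamily T hT n; .of_free
  have : Subsingleton (diskFamily T (-1)) := inferInstanceAs (Subsingleton PUnit)
  refine ⟨C.prod (disk (diskFamily T) hA), free_prod_diskFamily T C.P hT hPT, ⟨?_⟩⟩
  exact (show G ≃ₗ[R] LinearMap.ker (C.d (-1 + 1)) from e) ≪≫ₗ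
    LinearEquiv.ofEq _ _ (C.exact (-1)).linearMap_ker_eq ≪≫ₗ
    (LinearMap.rangeProdMapEquivOfEqZero _ _ (disk_d_eq_zero _ hA (-1))).symm

/-- Every `𝒳`-Gorenstein projective module admits an `𝒳`-complete projective
resolution consisting of free modules, in which it is the image of `F_0 → F^0`. -/
theorem xGorensteinProjective_exists_free_complete_resolution
    (R : Type u) [Ring R] (𝒳 : ModuleCat.{u} R → Prop)
    (h𝒳 : ∀ P : ModuleCat.{u} R, Module.Projective R P → 𝒳 P)
    (G : ModuleCat.{u} R) (hG : XGorensteinProjective R 𝒳 G) :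
    ∃ C : XCompleteResolution R 𝒳, (∀ n, Module.Free R (C.P n)) ∧
      Nonempty (G ≃ₗ[R] LinearMap.range (C.d (-1))) :=
  xGorensteinProjective_exists_free_complete_resolution_general R 𝒳 G hG
end

section
/- The class of X-Gorenstein projective left R-modules is closed under arbitrary direct sums. -/
open CategoryTheory DirectSum

universe u

section Aux

variable {R : Type u} [Ring R] {ι : Type u} [DecidableEq ι]
variable {A B C' : ι → Type u}
  [∀ i, AddCommGroup (A i)] [∀ i, Module R (A i)]
  [∀ i, AddCommGroup (B i)] [∀ i, Module R (B i)]
  [∀ i, AddCommGroup (C' i)] [∀ i, Module R (C' i)]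

/-- Componentwise map on direct sums. -/
def sumMap (f : ∀ i, A i →ₗ[R] B i) : (⨁ i, A i) →ₗ[R] ⨁ i, B i :=
  DFinsupp.mapRange.linearMap f

theorem sumMap_apply (f : ∀ i, A i →ₗ[R] B i) (x : ⨁ i, A i) (i : ι) :
    sumMap f x i = f i (x i) :=
  DFinsupp.mapRange_apply _ (fun i => (f i).map_zero) x i

theorem sumMap_of (f : ∀ i, A i →ₗ[R] B i) (i : ι) (a : A i) :
    sumMap f (DirectSum.of A i a) = DirectSum.of B i (f i a) :=
  DFinsupp.mapRange_single (hf := fun i => (f i).map_zero)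

theorem mem_range_sumMap {f : ∀ i, A i →ₗ[R] B i} {x : ⨁ i, B i}
    (h : ∀ i, x i ∈ LinearMap.range (f i)) : x ∈ LinearMap.range (sumMap f) := by
  classical
  choose y hy using fun i => h i
  refine ⟨∑ i ∈ DFinsupp.support x, DirectSum.of A i (y i), ?_⟩
  rw [map_sum]
  simp only [sumMap_of, hy]
  exact DirectSum.sum_support_of x

theorem sumMap_injective {f : ∀ i, A i →ₗ[R] B i}
    (hf : ∀ i, Function.Injective (f i)) : Function.Injective (sumMap f) := by
  intro x y hxy
  apply DFinsupp.ext
  intro i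
  apply hf i
  rw [← sumMap_apply f x i, ← sumMap_apply f y i, hxy]

theorem sumMap_exact {f : ∀ i, A i →ₗ[R] B i} {g : ∀ i, B i →ₗ[R] C' i}
    (hfg : ∀ i, Function.Exact (f i) (g i)) :
    Function.Exact (sumMap f) (sumMap g) := by
  intro x
  constructor
  · intro hx
    have h : ∀ i, x i ∈ LinearMap.range (f i) := fun i => by
      refine (hfg i (x i)).mp ?_
      rw [← sumMap_apply g x i, hx]
      rfl
    obtain ⟨y, hy⟩ := mem_range_sumMap h
    exact ⟨y, hy⟩
  · rintro ⟨y, rfl⟩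
    apply DFinsupp.ext
    intro i
    rw [sumMap_apply, sumMap_apply]
    exact (hfg i).apply_apply_eq_zero (y i)

end Aux

/-- The class of `𝒳`-Gorenstein projective modules is closed under arbitrary
direct sums. -/
theorem xGorensteinProjective_directSum
    (R : Type u) [Ring R] (𝒳 : ModuleCat.{u} R → Prop)
    (h𝒳 : ∀ P : ModuleCat.{u} R, Module.Projective R P → 𝒳 P)
    (ι : Type u) (M : ι → ModuleCat.{u} R)
    (hM : ∀ i, XGorensteinProjective R 𝒳 (M i)) :
    XGorensteinProjective R 𝒳 (ModuleCat.of R (⨁ i, M i)) := by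
  classical
  choose C hC using hM
  let e : ∀ i, M i ≃ₗ[R] LinearMap.ker ((C i).d 0) := fun i => (hC i).some
  refine ⟨{ P := fun n => ModuleCat.of R (⨁ i, (C i).P n)
            d := fun n => sumMap (fun i => (C i).d n)
            projective := ?_
            exact := ?_
            homExact := ?_ }, ?_⟩
  · intro n
    haveI : ∀ i, Module.Projective R ((C i).P n) := fun i => (C i).projective n
    exact inferInstanceAs (Module.Projective R (Π₀ i, ((C i).P n : Type u)))
  · intro n
    exact sumMap_exact (fun i => (C i).exact n)
  · intro Y hY n
    intro h
    constructor
    · intro hh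
      have hcomp : ∀ i,
          ((h ∘ₗ DirectSum.lof R ι (fun j => ((C j).P (n + 1) : Type u)) i) ∘ₗ (C i).d n) = 0 := by
        intro i
        ext a
        have hh' : h ∘ₗ sumMap (fun j => (C j).d n) = 0 := hh
        have : h (sumMap (fun j => (C j).d n)
            (DirectSum.lof R ι (fun j => ((C j).P n : Type u)) i a)) = 0 :=
          LinearMap.congr_fun hh' _
        rw [DirectSum.lof_eq_of, sumMap_of, ← DirectSum.lof_eq_of (R := R)] at this
        exact this
      have hex := fun i => ((C i).homExact Y hY n
        (h ∘ₗ DirectSum.lof R ι (fun j => ((C j).P (n + 1) : Type u)) i)).mp (hcomp i)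
      choose k hk using hex
      refine ⟨DirectSum.toModule R ι Y k, ?_⟩
      apply DirectSum.linearMap_ext
      intro i
      ext a
      have h1 : sumMap (fun j => (C j).d (n + 1))
          (DirectSum.lof R ι (fun j => ((C j).P (n + 1) : Type u)) i a)
          = DirectSum.lof R ι (fun j => ((C j).P (n + 1 + 1) : Type u)) i ((C i).d (n + 1) a) := by
        rw [DirectSum.lof_eq_of, sumMap_of, DirectSum.lof_eq_of]
      show DirectSum.toModule R ι Y k (sumMap (fun j => (C j).d (n + 1))
          (DirectSum.lof R ι (fun j => ((C j).P (n + 1) : Type u)) i a))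
        = h (DirectSum.lof R ι (fun j => ((C j).P (n + 1) : Type u)) i a)
      rw [h1, DirectSum.toModule_lof]
      exact LinearMap.congr_fun (hk i) a
    · rintro ⟨k, rfl⟩
      refine LinearMap.ext fun x => ?_
      show k (sumMap (fun j => (C j).d (n + 1)) (sumMap (fun j => (C j).d n) x)) = 0
      rw [(sumMap_exact fun i => (C i).exact n).apply_apply_eq_zero, map_zero]
  · refine ⟨?_⟩
    let ψ : (⨁ i, M i) →ₗ[R] ⨁ i, (C i).P 0 :=
      sumMap (fun i => (LinearMap.ker ((C i).d 0)).subtype ∘ₗ (e i).toLinearMap)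
    have hinj : Function.Injective ψ :=
      sumMap_injective fun i =>
        (LinearMap.ker ((C i).d 0)).injective_subtype.comp (e i).injective
    have hrange : LinearMap.range ψ = LinearMap.ker (sumMap (fun i => (C i).d 0)) := by
      ext x
      constructor
      · rintro ⟨y, rfl⟩
        rw [LinearMap.mem_ker]
        apply DFinsupp.ext
        intro i
        rw [sumMap_apply, sumMap_apply]
        exact (e i (y i)).2
      · intro hx
        rw [LinearMap.mem_ker] at hx
        apply mem_range_sumMap
        intro i
        have hxi : x i ∈ LinearMap.ker ((C i).d 0) := by
          rw [LinearMap.mem_ker, ← sumMap_apply (fun j => (C j).d 0) x i, hx]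
          rfl
        exact ⟨(e i).symm ⟨x i, hxi⟩, by simp⟩
    exact (LinearEquiv.ofInjective ψ hinj).trans (LinearEquiv.ofEq _ _ hrange)
end

section
/- Let M be a left R-module with two exact sequences 0 → K_n → G_{n-1} → ... → G_0 → M → 0 and 0 → K'_n → G'_{n-1} → ... → G'_0 → M → 0, where all G_i and G'_i are X-Gorenstein projective. Then K_n is X-Gorenstein projective if and only if K'_n is. -/
open CategoryTheory DirectSum

universe u

/-!
The class of `𝒳`-Gorenstein projective modules is resolving: it contains the projectives, and in
a short exact sequence `0 → A → B → C → 0` with `C` in the class, `A` lies in it iff `B` does.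
For a resolving class, the kernels of two resolutions of `M` of the same length by members of
the class are simultaneously in it: pull back the first steps `G₀ → M ← G'₀`, and compare both
resulting short exact sequences with one projective resolution of the fibre product by means of
horseshoe resolutions.

That the class is resolving is seen through its intrinsic description: `G` is `𝒳`-Gorenstein
projective iff `Ext^{≥1}(G, 𝒳) = 0` and `G` has a coresolution by projectives whose cosyzygies
`C` all satisfy `Ext¹(C, 𝒳) = 0`; splicing such a coresolution with a projective resolution of
`G` gives back a complete resolution. Both conditions pass to extensions and to kernels of
epimorphisms by horseshoe arguments.
-/

open Function (Injective Surjective)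
open LinearMap (ker range)

section

variable {R : Type u} [Ring R]

structure IsShortExact {A B C : ModuleCat.{u} R} (i : A →ₗ[R] B) (p : B →ₗ[R] C) : Prop where
  injective : Injective i
  surjective : Surjective p
  exact : Function.Exact i p

theorem isShortExact_subtype_ker {B C : ModuleCat.{u} R} (p : B →ₗ[R] C) (hp : Surjective p) :
    IsShortExact (A := ModuleCat.of R (ker p)) (ker p).subtype p :=
  ⟨Subtype.val_injective, hp, LinearMap.exact_subtype_ker_map p⟩

theorem isShortExact_mkQ {A B : ModuleCat.{u} R} (i : A →ₗ[R] B) (hi : Injective i) :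
    IsShortExact (C := ModuleCat.of R (B ⧸ range i)) i (range i).mkQ :=
  ⟨hi, Submodule.mkQ_surjective _, LinearMap.exact_map_mkQ_range i⟩

theorem isShortExact_zero_of_equiv {A B : ModuleCat.{u} R} (e : A ≃ₗ[R] B) :
    IsShortExact (C := ModuleCat.of R PUnit) e.toLinearMap 0 :=
  ⟨e.injective, fun _ => ⟨0, rfl⟩, fun b => ⟨fun _ => e.surjective b, fun _ => rfl⟩⟩

namespace IsShortExact

variable {A B C : ModuleCat.{u} R} {i : A →ₗ[R] B} {p : B →ₗ[R] C}

theorem comp_equiv_left {A' : ModuleCat.{u} R} (h : IsShortExact i p) (e : A' ≃ₗ[R] A) :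
    IsShortExact (i ∘ₗ e.toLinearMap) p :=
  ⟨h.injective.comp e.injective, h.surjective, e.precomp_exact_iff_exact.mpr h.exact⟩

theorem comp_equiv_right {C' : ModuleCat.{u} R} (h : IsShortExact i p) (e : C ≃ₗ[R] C') :
    IsShortExact i (e.toLinearMap ∘ₗ p) :=
  ⟨h.injective, e.surjective.comp h.surjective, e.postcomp_exact_iff_exact.mpr h.exact⟩

theorem apply_apply (h : IsShortExact i p) (a : A) : p (i a) = 0 :=
  h.exact.apply_apply_eq_zero a

theorem exists_desc (h : IsShortExact i p) {Y : ModuleCat.{u} R} (u : B →ₗ[R] Y)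
    (hu : u ∘ₗ i = 0) : ∃ v : C →ₗ[R] Y, v ∘ₗ p = u := by
  have hle : range i ≤ ker u := by
    rintro _ ⟨a, rfl⟩
    exact LinearMap.congr_fun hu a
  refine ⟨(range i).liftQ u hle ∘ₗ (h.exact.linearEquivOfSurjective h.surjective).symm.toLinearMap,
    ?_⟩
  ext b
  simp

theorem exists_retraction (h : IsShortExact i p) [Module.Projective R C] :
    ∃ r : B →ₗ[R] A, r ∘ₗ i = LinearMap.id :=
  ((h.exact.split_tfae h.injective h.surjective).out 0 1).mp
    (Module.projective_lifting_property p LinearMap.id h.surjective)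

end IsShortExact

abbrev IsProjective (P : ModuleCat.{u} R) : Prop := Module.Projective R P

namespace ResWithKernel

variable {𝒞 : ModuleCat.{u} R → Prop}

theorem succ_iff {n : ℕ} {K M : ModuleCat.{u} R} :
    ResWithKernel R 𝒞 (n + 1) K M ↔ ∃ (G L : ModuleCat.{u} R) (f : L →ₗ[R] G) (g : G →ₗ[R] M),
      𝒞 G ∧ IsShortExact f g ∧ ResWithKernel R 𝒞 n K L :=
  ⟨fun ⟨G, L, f, g, hG, hf, hg, hfg, hres⟩ => ⟨G, L, f, g, hG, ⟨hf, hg, hfg⟩, hres⟩,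
    fun ⟨G, L, f, g, hG, ⟨hf, hg, hfg⟩, hres⟩ => ⟨G, L, f, g, hG, hf, hg, hfg, hres⟩⟩

theorem cons {n : ℕ} {K A B C : ModuleCat.{u} R} {i : A →ₗ[R] B} {p : B →ₗ[R] C}
    (h : ResWithKernel R 𝒞 n K A) (hip : IsShortExact i p) (hB : 𝒞 B) :
    ResWithKernel R 𝒞 (n + 1) K C :=
  succ_iff.mpr ⟨B, A, i, p, hB, hip, h⟩

theorem one {A B C : ModuleCat.{u} R} {i : A →ₗ[R] B} {p : B →ₗ[R] C} (hip : IsShortExact i p)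
    (hB : 𝒞 B) : ResWithKernel R 𝒞 1 A C :=
  cons ⟨LinearEquiv.refl R A⟩ hip hB

theorem of_equiv_right {n : ℕ} {K M M' : ModuleCat.{u} R} (e : M ≃ₗ[R] M')
    (h : ResWithKernel R 𝒞 n K M) : ResWithKernel R 𝒞 n K M' := by
  cases n with
  | zero => obtain ⟨e₀⟩ := h; exact ⟨e₀.trans e⟩
  | succ n =>
    obtain ⟨G, L, f, g, hG, hfg, hres⟩ := succ_iff.mp h
    exact cons hres (hfg.comp_equiv_right e) hG

theorem trans {m n : ℕ} {K' K M : ModuleCat.{u} R} (h₁ : ResWithKernel R 𝒞 m K' K)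
    (h₂ : ResWithKernel R 𝒞 n K M) : ResWithKernel R 𝒞 (m + n) K' M := by
  induction n generalizing M with
  | zero => obtain ⟨e⟩ := h₂; exact of_equiv_right e h₁
  | succ n ih =>
    obtain ⟨G, L, f, g, hG, hfg, hres⟩ := succ_iff.mp h₂
    exact cons (ih hres) hfg hG

theorem snoc {n : ℕ} {K' P K M : ModuleCat.{u} R} {i : K' →ₗ[R] P} {p : P →ₗ[R] K}
    (h : ResWithKernel R 𝒞 n K M) (hip : IsShortExact i p) (hP : 𝒞 P) :
    ResWithKernel R 𝒞 (n + 1) K' M :=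
  Nat.add_comm 1 n ▸ (one hip hP).trans h

theorem mono {𝒞' : ModuleCat.{u} R → Prop} (h𝒞 : ∀ N, 𝒞 N → 𝒞' N) {n : ℕ}
    {K M : ModuleCat.{u} R} (h : ResWithKernel R 𝒞 n K M) : ResWithKernel R 𝒞' n K M := by
  induction n generalizing M with
  | zero => exact h
  | succ n ih =>
    obtain ⟨G, L, f, g, hG, hfg, hres⟩ := succ_iff.mp h
    exact cons (ih hres) hfg (h𝒞 G hG)

theorem projective {n : ℕ} {K M : ModuleCat.{u} R} (h : ResWithKernel R IsProjective n K M)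
    (hM : Module.Projective R M) : Module.Projective R K := by
  induction n generalizing M with
  | zero => obtain ⟨e⟩ := h; exact Module.Projective.of_equiv e.symm
  | succ n ih =>
    obtain ⟨G, L, f, g, hG, hfg, hres⟩ := succ_iff.mp h
    obtain ⟨r, hr⟩ := hfg.exists_retraction
    exact ih hres (Module.Projective.of_split f r hr)

end ResWithKernel

noncomputable def freeCover (M : ModuleCat.{u} R) : ModuleCat.{u} R := ModuleCat.of R (M →₀ R)

instance (M : ModuleCat.{u} R) : Module.Projective R (freeCover M) :=
  inferInstanceAs (Module.Projective R (M →₀ R))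

noncomputable def freeCover.π (M : ModuleCat.{u} R) : freeCover M →ₗ[R] M :=
  Finsupp.linearCombination R _root_.id

theorem freeCover.π_surjective (M : ModuleCat.{u} R) : Surjective (freeCover.π M) :=
  Finsupp.linearCombination_id_surjective R M

noncomputable def syzygy (M : ModuleCat.{u} R) : ℕ → ModuleCat.{u} R
  | 0 => M
  | n + 1 => ModuleCat.of R (ker (freeCover.π (syzygy M n)))

theorem isShortExact_syzygy (M : ModuleCat.{u} R) (n : ℕ) :
    IsShortExact (A := syzygy M (n + 1)) (ker (freeCover.π (syzygy M n))).subtype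
      (freeCover.π (syzygy M n)) :=
  isShortExact_subtype_ker _ (freeCover.π_surjective _)

theorem resWithKernel_syzygy (M : ModuleCat.{u} R) (n : ℕ) :
    ResWithKernel R IsProjective n (syzygy M n) M := by
  induction n with
  | zero => exact ⟨LinearEquiv.refl R M⟩
  | succ n ih => exact ih.snoc (isShortExact_syzygy M n) inferInstance

section FiberProduct

variable {A B C : ModuleCat.{u} R}

noncomputable def fiberProduct (f : A →ₗ[R] C) (g : B →ₗ[R] C) : ModuleCat.{u} R :=
  ModuleCat.of R (ker (f ∘ₗ LinearMap.fst R A B - g ∘ₗ LinearMap.snd R A B))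

namespace fiberProduct

variable (f : A →ₗ[R] C) (g : B →ₗ[R] C)

noncomputable def fst : fiberProduct f g →ₗ[R] A := LinearMap.fst R A B ∘ₗ Submodule.subtype _

noncomputable def snd : fiberProduct f g →ₗ[R] B := LinearMap.snd R A B ∘ₗ Submodule.subtype _

variable {f g}

theorem condition (x : fiberProduct f g) : f (fst f g x) = g (snd f g x) :=
  sub_eq_zero.mp x.2

theorem ext {x y : fiberProduct f g} (h₁ : fst f g x = fst f g y) (h₂ : snd f g x = snd f g y) :
    x = y :=
  Subtype.ext (Prod.ext h₁ h₂)

noncomputable def lift {X : ModuleCat.{u} R} (u : X →ₗ[R] A) (v : X →ₗ[R] B)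
    (h : ∀ x, f (u x) = g (v x)) : X →ₗ[R] fiberProduct f g :=
  (u.prod v).codRestrict _ fun x => sub_eq_zero.mpr (h x)

@[simp]
theorem fst_lift {X : ModuleCat.{u} R} (u : X →ₗ[R] A) (v : X →ₗ[R] B)
    (h : ∀ x, f (u x) = g (v x)) (x : X) : fst f g (lift u v h x) = u x := rfl

@[simp]
theorem snd_lift {X : ModuleCat.{u} R} (u : X →ₗ[R] A) (v : X →ₗ[R] B)
    (h : ∀ x, f (u x) = g (v x)) (x : X) : snd f g (lift u v h x) = v x := rfl

theorem exists_of_eq {a : A} {b : B} (h : f a = g b) :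
    ∃ x : fiberProduct f g, fst f g x = a ∧ snd f g x = b :=
  ⟨⟨(a, b), sub_eq_zero.mpr h⟩, rfl, rfl⟩

end fiberProduct

open fiberProduct

theorem IsShortExact.fiberProduct_snd {K : ModuleCat.{u} R} {k : K →ₗ[R] A} {f : A →ₗ[R] C}
    (h : IsShortExact k f) (g : B →ₗ[R] C) : ∃ j : K →ₗ[R] fiberProduct f g,
      IsShortExact j (snd f g) ∧ ∀ x, fst f g (j x) = k x := by
  refine ⟨lift k 0 fun x => by simp [h.apply_apply], ⟨fun x y hxy => h.injective ?_, ?_, ?_⟩,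
    fun _ => rfl⟩
  · simpa using congrArg (fst f g) hxy
  · intro b
    obtain ⟨a, ha⟩ := h.surjective (g b)
    obtain ⟨x, -, hx⟩ := exists_of_eq ha
    exact ⟨x, hx⟩
  · intro x
    refine ⟨fun hx => ?_, ?_⟩
    · have : f (fst f g x) = 0 := by rw [condition, hx, map_zero]
      obtain ⟨y, hy⟩ := (h.exact _).mp this
      exact ⟨y, ext (by simpa using hy) (by simpa using hx.symm)⟩
    · rintro ⟨y, rfl⟩
      simp

theorem IsShortExact.fiberProduct_fst {K : ModuleCat.{u} R} {k : K →ₗ[R] B} {g : B →ₗ[R] C}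
    (h : IsShortExact k g) (f : A →ₗ[R] C) : ∃ j : K →ₗ[R] fiberProduct f g,
      IsShortExact j (fst f g) ∧ ∀ x, snd f g (j x) = k x := by
  refine ⟨lift 0 k fun x => by simp [h.apply_apply], ⟨fun x y hxy => h.injective ?_, ?_, ?_⟩,
    fun _ => rfl⟩
  · simpa using congrArg (snd f g) hxy
  · intro a
    obtain ⟨b, hb⟩ := h.surjective (f a)
    obtain ⟨x, hx, -⟩ := exists_of_eq hb.symm
    exact ⟨x, hx⟩
  · intro x
    refine ⟨fun hx => ?_, ?_⟩
    · have : g (snd f g x) = 0 := by rw [← condition, hx, map_zero]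
      obtain ⟨y, hy⟩ := (h.exact _).mp this
      exact ⟨y, ext (by simpa using hx.symm) (by simpa using hy)⟩
    · rintro ⟨y, rfl⟩
      simp

theorem IsShortExact.fiberProduct_fst_of_surjective {U M V W : ModuleCat.{u} R}
    {ι : U →ₗ[R] M} {π : M →ₗ[R] V} (h : IsShortExact ι π) {p : W →ₗ[R] M} (hp : Surjective p) :
    IsShortExact (fst p ι) (π ∘ₗ p) := by
  refine ⟨fun x y hxy => ext hxy (h.injective ?_), h.surjective.comp hp, fun w => ?_⟩
  · rw [← condition, ← condition, hxy]
  · refine ⟨fun hw => ?_, ?_⟩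
    · obtain ⟨a, ha⟩ := (h.exact (p w)).mp hw
      obtain ⟨x, hx, -⟩ := exists_of_eq ha.symm
      exact ⟨x, hx⟩
    · rintro ⟨x, rfl⟩
      simp [condition, h.apply_apply]

end FiberProduct

theorem IsShortExact.exists_surjective_freeCover_prod {A B C : ModuleCat.{u} R}
    {i : A →ₗ[R] B} {p : B →ₗ[R] C} (h : IsShortExact i p) :
    ∃ e : ModuleCat.of R (freeCover A × freeCover C) →ₗ[R] B, Surjective e ∧
      (∀ x, e (x, 0) = i (freeCover.π A x)) ∧ ∀ z, p (e z) = freeCover.π C z.2 := by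
  obtain ⟨l, hl⟩ := Module.projective_lifting_property p (freeCover.π C) h.surjective
  have hpl (y : freeCover C) : p (l y) = freeCover.π C y := LinearMap.congr_fun hl y
  refine ⟨i ∘ₗ freeCover.π A ∘ₗ LinearMap.fst _ _ _ + l ∘ₗ LinearMap.snd _ _ _, fun b => ?_,
    fun x => by simp, fun z => by simp [h.apply_apply, hpl]⟩
  obtain ⟨y, hy⟩ := freeCover.π_surjective C (p b)
  obtain ⟨a, ha⟩ := (h.exact (b - l y)).mp (by rw [map_sub, hpl, hy, sub_self])
  obtain ⟨x, rfl⟩ := freeCover.π_surjective A a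
  exact ⟨(x, y), by simp [ha]⟩

theorem IsShortExact.horseshoe {A B C : ModuleCat.{u} R} {i : A →ₗ[R] B} {p : B →ₗ[R] C}
    (h : IsShortExact i p) : ∃ (A' B' C' : ModuleCat.{u} R) (i' : A' →ₗ[R] B') (p' : B' →ₗ[R] C'),
      IsShortExact i' p' ∧ ResWithKernel R IsProjective 1 A' A ∧
      ResWithKernel R IsProjective 1 B' B ∧ ResWithKernel R IsProjective 1 C' C := by
  obtain ⟨eB, heB, heB_inl, hp_eB⟩ := h.exists_surjective_freeCover_prod
  let eA := freeCover.π A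
  let eC := freeCover.π C
  let i' : ModuleCat.of R (ker eA) →ₗ[R] ModuleCat.of R (ker eB) :=
    (LinearMap.inl _ _ _ ∘ₗ (ker eA).subtype).codRestrict _ fun x => by
      simp [heB_inl]
  let p' : ModuleCat.of R (ker eB) →ₗ[R] ModuleCat.of R (ker eC) :=
    (LinearMap.snd _ _ _ ∘ₗ (ker eB).subtype).codRestrict _ fun z => by
      simp [← hp_eB, show eB z = 0 from z.2, eC]
  refine ⟨_, _, _, i', p', ⟨fun x y hxy => ?_, ?_, ?_⟩,
    .one (isShortExact_subtype_ker eA (freeCover.π_surjective A)) inferInstance,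
    .one (isShortExact_subtype_ker eB heB) (inferInstanceAs (Module.Projective R (_ × _))),
    .one (isShortExact_subtype_ker eC (freeCover.π_surjective C)) inferInstance⟩
  · exact Subtype.ext (congrArg (fun z : ker eB => (z.1.1 : freeCover A)) hxy)
  · rintro ⟨y, hy⟩
    obtain ⟨a, ha⟩ := (h.exact (eB (0, y))).mp (by rw [hp_eB]; exact hy)
    obtain ⟨x, rfl⟩ := freeCover.π_surjective A a
    have hz : (-x, y) ∈ ker eB := by
      rw [LinearMap.mem_ker, show ((-x, y) : freeCover A × freeCover C) = (0, y) - (x, 0) by simp,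
        map_sub, ← ha, heB_inl, sub_self]
    exact ⟨⟨(-x, y), hz⟩, rfl⟩
  · rintro ⟨⟨x, y⟩, hz⟩
    refine ⟨fun h0 => ?_, ?_⟩
    · have hy : y = 0 := congrArg Subtype.val h0
      have hx : eA x = 0 := h.injective (by rw [← heB_inl, ← hy, map_zero]; exact hz)
      exact ⟨⟨x, hx⟩, Subtype.ext (Prod.ext rfl hy.symm)⟩
    · rintro ⟨w, hw⟩
      rw [← hw]
      rfl

theorem IsShortExact.horseshoe_res {A B C : ModuleCat.{u} R} {i : A →ₗ[R] B} {p : B →ₗ[R] C}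
    (h : IsShortExact i p) (n : ℕ) :
    ∃ (A' B' C' : ModuleCat.{u} R) (i' : A' →ₗ[R] B') (p' : B' →ₗ[R] C'),
      IsShortExact i' p' ∧ ResWithKernel R IsProjective n A' A ∧
      ResWithKernel R IsProjective n B' B ∧ ResWithKernel R IsProjective n C' C := by
  induction n generalizing A B C with
  | zero => exact ⟨A, B, C, i, p, h, ⟨.refl R A⟩, ⟨.refl R B⟩, ⟨.refl R C⟩⟩
  | succ n ih =>
    obtain ⟨A', B', C', i', p', h', hA, hB, hC⟩ := h.horseshoe
    obtain ⟨A'', B'', C'', i'', p'', h'', hA', hB', hC'⟩ := ih h'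
    exact ⟨A'', B'', C'', i'', p'', h'', hA'.trans hA, hB'.trans hB, hC'.trans hC⟩

/-- Comparing both resolutions with the fibre product of their first terms over `M`, and taking
horseshoe resolutions of the two resulting short exact sequences, reduces the claim to length
`n`. -/
theorem ResWithKernel.iff_of_forall_isShortExact {𝒞 Φ : ModuleCat.{u} R → Prop}
    (hproj : ∀ P : ModuleCat.{u} R, Module.Projective R P → 𝒞 P)
    (hsyz : ∀ {n : ℕ} {K C : ModuleCat.{u} R}, ResWithKernel R IsProjective n K C → 𝒞 C → 𝒞 K)
    (hses : ∀ {A B C : ModuleCat.{u} R} {i : A →ₗ[R] B} {p : B →ₗ[R] C},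
      IsShortExact i p → 𝒞 C → (Φ A ↔ Φ B))
    {n : ℕ} {M K K' : ModuleCat.{u} R} (h : ResWithKernel R 𝒞 n K M)
    (h' : ResWithKernel R 𝒞 n K' M) : Φ K ↔ Φ K' := by
  induction n generalizing M K K' with
  | zero =>
    obtain ⟨e⟩ := h
    obtain ⟨e'⟩ := h'
    exact hses (isShortExact_zero_of_equiv (e.trans e'.symm)) (hproj _ inferInstance)
  | succ n ih =>
    obtain ⟨G, L, i, p, hG, hip, hres⟩ := ResWithKernel.succ_iff.mp h
    obtain ⟨G', L', i', p', hG', hip', hres'⟩ := ResWithKernel.succ_iff.mp h'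
    have key : ∀ {L G K : ModuleCat.{u} R} {k : L →ₗ[R] fiberProduct p p'}
        {q : fiberProduct p p' →ₗ[R] G}, IsShortExact k q → 𝒞 G → ResWithKernel R 𝒞 n K L →
        (Φ K ↔ Φ (syzygy (fiberProduct p p') n)) := by
      intro L G K k q hkq hG hres
      obtain ⟨X, Y, Z, _, _, hXYZ, hX, hY, hZ⟩ := hkq.horseshoe_res n
      have hmono {A B : ModuleCat.{u} R} (h : ResWithKernel R IsProjective n A B) :
          ResWithKernel R 𝒞 n A B := h.mono hproj
      exact ((ih hres (hmono hX)).trans (hses hXYZ (hsyz hZ hG))).trans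
        (ih (hmono hY) (hmono (resWithKernel_syzygy _ n)))
    obtain ⟨j, hj, -⟩ := hip.fiberProduct_snd p'
    obtain ⟨j', hj', -⟩ := hip'.fiberProduct_fst p
    exact (key hj hG' hres).trans (key hj' hG hres').symm

structure IsResolving (𝒢 : ModuleCat.{u} R → Prop) : Prop where
  projective : ∀ P : ModuleCat.{u} R, Module.Projective R P → 𝒢 P
  iff_of_isShortExact : ∀ {A B C : ModuleCat.{u} R} {i : A →ₗ[R] B} {p : B →ₗ[R] C},
    IsShortExact i p → 𝒢 C → (𝒢 A ↔ 𝒢 B)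

namespace IsResolving

variable {𝒢 : ModuleCat.{u} R → Prop}

theorem of_resWithKernel (h𝒢 : IsResolving 𝒢) {n : ℕ} {K M : ModuleCat.{u} R}
    (h : ResWithKernel R 𝒢 n K M) (hM : 𝒢 M) : 𝒢 K := by
  induction n generalizing M with
  | zero => obtain ⟨e⟩ := h; exact (h𝒢.iff_of_isShortExact (isShortExact_zero_of_equiv e)
      (h𝒢.projective _ inferInstance)).mpr hM
  | succ n ih =>
    obtain ⟨G, L, f, g, hG, hfg, hres⟩ := ResWithKernel.succ_iff.mp h
    exact ih hres ((h𝒢.iff_of_isShortExact hfg hM).mpr hG)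

theorem kernel_iff (h𝒢 : IsResolving 𝒢) {n : ℕ} {M K K' : ModuleCat.{u} R}
    (h : ResWithKernel R 𝒢 n K M) (h' : ResWithKernel R 𝒢 n K' M) : 𝒢 K ↔ 𝒢 K' :=
  ResWithKernel.iff_of_forall_isShortExact h𝒢.projective
    (fun hres hC => h𝒢.of_resWithKernel (hres.mono h𝒢.projective) hC) h𝒢.iff_of_isShortExact h h'

end IsResolving

def ExtOneVanishes (G Y : ModuleCat.{u} R) : Prop :=
  ∀ ⦃A B : ModuleCat.{u} R⦄ (i : A →ₗ[R] B) (p : B →ₗ[R] G), IsShortExact i p →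
    ∀ φ : A →ₗ[R] Y, ∃ ψ : B →ₗ[R] Y, ψ ∘ₗ i = φ

namespace ExtOneVanishes

open fiberProduct

variable {G Y : ModuleCat.{u} R}

theorem of_equiv {G' : ModuleCat.{u} R} (e : G ≃ₗ[R] G') (h : ExtOneVanishes G Y) :
    ExtOneVanishes G' Y :=
  fun _ _ i p hip φ => h i (e.symm.toLinearMap ∘ₗ p) (hip.comp_equiv_right e.symm) φ

theorem of_projective [Module.Projective R G] : ExtOneVanishes G Y := by
  intro _ _ i p hip φ
  obtain ⟨r, hr⟩ := hip.exists_retraction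
  exact ⟨φ ∘ₗ r, by rw [LinearMap.comp_assoc, hr, LinearMap.comp_id]⟩

theorem of_isShortExact {U V : ModuleCat.{u} R} {ι : U →ₗ[R] G} {π : G →ₗ[R] V}
    (h : IsShortExact ι π) (hU : ExtOneVanishes U Y) (hV : ExtOneVanishes V Y) :
    ExtOneVanishes G Y := by
  intro X W i p hip φ
  obtain ⟨j, hj, hij⟩ := hip.fiberProduct_snd ι
  obtain ⟨ψ₁, hψ₁⟩ := hU j _ hj φ
  obtain ⟨ψ, hψ⟩ := hV _ _ (h.fiberProduct_fst_of_surjective hip.surjective) ψ₁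
  refine ⟨ψ, LinearMap.ext fun x => ?_⟩
  rw [LinearMap.comp_apply, ← hij, ← LinearMap.comp_apply ψ, hψ, ← LinearMap.comp_apply, hψ₁]

theorem of_retract {X : ModuleCat.{u} R} (s : X →ₗ[R] G) (r : G →ₗ[R] X)
    (hrs : r ∘ₗ s = LinearMap.id) (h : ExtOneVanishes G Y) : ExtOneVanishes X Y := by
  intro A B i p hip φ
  obtain ⟨j, hj, hij⟩ := hip.fiberProduct_snd r
  obtain ⟨ψ, hψ⟩ := h j _ hj φ
  have hrsp (b : B) : p b = r (s (p b)) := (LinearMap.congr_fun hrs (p b)).symm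
  refine ⟨ψ ∘ₗ lift LinearMap.id (s ∘ₗ p) hrsp, LinearMap.ext fun a => ?_⟩
  have : lift LinearMap.id (s ∘ₗ p) hrsp (i a) = j a :=
    ext (by simp [hij]) (by simp [hip.apply_apply, hj.apply_apply])
  rw [LinearMap.comp_apply, LinearMap.comp_apply, this, ← LinearMap.comp_apply, hψ]

/-- This is the exact sequence `Hom(E, Y) → Hom(K, Y) → Ext¹(G, Y) → Ext¹(E, Y)`. -/
theorem of_isShortExact_of_forall_extend {K E : ModuleCat.{u} R} {ι : K →ₗ[R] E} {p : E →ₗ[R] G}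
    (h : IsShortExact ι p) (hE : ExtOneVanishes E Y)
    (hext : ∀ φ : K →ₗ[R] Y, ∃ ψ : E →ₗ[R] Y, ψ ∘ₗ ι = φ) : ExtOneVanishes G Y := by
  intro X W i q hiq φ
  obtain ⟨j, hj, hij⟩ := hiq.fiberProduct_snd p
  obtain ⟨φ', hφ'⟩ := hE j _ hj φ
  obtain ⟨j', hj', hιj'⟩ := h.fiberProduct_fst q
  obtain ⟨ψ, hψ⟩ := hext (φ' ∘ₗ j')
  obtain ⟨β, hβ⟩ := hj'.exists_desc (φ' - ψ ∘ₗ snd q p) (by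
    ext k
    simp [hιj', ← LinearMap.comp_apply ψ, hψ])
  refine ⟨β, LinearMap.ext fun x => ?_⟩
  rw [LinearMap.comp_apply, ← hij, ← LinearMap.comp_apply β, hβ]
  simp [hj.apply_apply, ← LinearMap.comp_apply φ', hφ']

theorem iff_of_resWithKernel {n : ℕ} {M K K' : ModuleCat.{u} R}
    (h : ResWithKernel R IsProjective n K M) (h' : ResWithKernel R IsProjective n K' M) :
    ExtOneVanishes K Y ↔ ExtOneVanishes K' Y :=
  ResWithKernel.iff_of_forall_isShortExact (fun _ hP => hP) (fun hres hC => hres.projective hC)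
    (fun hip hC => ⟨fun hA => of_isShortExact hip hA (have := hC; of_projective),
      fun hB => have := hC; let ⟨r, hr⟩ := hip.exists_retraction; of_retract _ r hr hB⟩) h h'

theorem of_isShortExact_left {A B : ModuleCat.{u} R} {i : A →ₗ[R] B} {p : B →ₗ[R] G}
    (h : IsShortExact i p) (hB : ExtOneVanishes B Y)
    (hG : ∀ K : ModuleCat.{u} R, ResWithKernel R IsProjective 1 K G → ExtOneVanishes K Y) :
    ExtOneVanishes A Y := by
  have he := isShortExact_subtype_ker _ (freeCover.π_surjective B)
  obtain ⟨j, hj, hfj⟩ := he.fiberProduct_snd i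
  refine of_isShortExact_of_forall_extend hj
    (hG _ (.one (h.fiberProduct_fst_of_surjective (freeCover.π_surjective B)) inferInstance))
    fun φ => ?_
  obtain ⟨ψ, hψ⟩ := hB _ _ he φ
  exact ⟨ψ ∘ₗ fst _ _, LinearMap.ext fun k => by simp [hfj, ← hψ]⟩

end ExtOneVanishes

/-- `Ext^k(G, Y) = 0` for all `k ≥ 1`, by dimension shifting: `Ext¹(K, Y) = 0` for every syzygy
`K` of `G`. -/
def ExtVanishes (G Y : ModuleCat.{u} R) : Prop :=
  ∀ (n : ℕ) (K : ModuleCat.{u} R), ResWithKernel R IsProjective n K G → ExtOneVanishes K Y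

namespace ExtVanishes

variable {G Y : ModuleCat.{u} R}

theorem extOneVanishes (h : ExtVanishes G Y) : ExtOneVanishes G Y :=
  h 0 G ⟨LinearEquiv.refl R G⟩

theorem of_equiv {G' : ModuleCat.{u} R} (e : G ≃ₗ[R] G') (h : ExtVanishes G Y) :
    ExtVanishes G' Y :=
  fun n K hres => h n K (hres.of_equiv_right e.symm)

theorem of_projective [Module.Projective R G] : ExtVanishes G Y :=
  fun _ _ hres => have := hres.projective ‹_›; .of_projective

theorem of_kernel {K P : ModuleCat.{u} R} {i : K →ₗ[R] P} {p : P →ₗ[R] G} (hip : IsShortExact i p)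
    [Module.Projective R P] (hK : ExtVanishes K Y) (hG : ExtOneVanishes G Y) :
    ExtVanishes G Y := by
  rintro (_ | n) K₀ hres
  · obtain ⟨e⟩ := hres
    exact hG.of_equiv e.symm
  · exact (ExtOneVanishes.iff_of_resWithKernel hres
      ((resWithKernel_syzygy K n).cons hip ‹_›)).mpr (hK n _ (resWithKernel_syzygy K n))

theorem of_isShortExact {A C : ModuleCat.{u} R} {i : A →ₗ[R] G} {p : G →ₗ[R] C}
    (hip : IsShortExact i p) (hA : ExtVanishes A Y) (hC : ExtVanishes C Y) : ExtVanishes G Y := by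
  intro n K hres
  obtain ⟨X, Z, W, _, _, hXZW, hX, hZ, hW⟩ := hip.horseshoe_res n
  exact (ExtOneVanishes.iff_of_resWithKernel hZ hres).mp
    (.of_isShortExact hXZW (hA n X hX) (hC n W hW))

theorem of_isShortExact_left {B C : ModuleCat.{u} R} {i : G →ₗ[R] B} {p : B →ₗ[R] C}
    (hip : IsShortExact i p) (hB : ExtVanishes B Y) (hC : ExtVanishes C Y) : ExtVanishes G Y := by
  intro n K hres
  obtain ⟨X, Z, W, _, _, hXZW, hX, hZ, hW⟩ := hip.horseshoe_res n
  exact (ExtOneVanishes.iff_of_resWithKernel hX hres).mp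
    (.of_isShortExact_left hXZW (hB n Z hZ) fun K hK => hC (1 + n) K (hK.trans hW))

end ExtVanishes

theorem IsShortExact.injective_prod {A B C QA QC : ModuleCat.{u} R} {i : A →ₗ[R] B}
    {p : B →ₗ[R] C} (h : IsShortExact i p) {ιA : A →ₗ[R] QA} (hιA : Injective ιA)
    {ιC : C →ₗ[R] QC} (hιC : Injective ιC) {e : B →ₗ[R] QA} (he : ∀ a, e (i a) = ιA a) :
    Injective (e.prod (ιC ∘ₗ p)) := by
  refine (injective_iff_map_eq_zero _).mpr fun b hb => ?_
  obtain ⟨a, rfl⟩ := (h.exact b).mp (hιC ((congrArg Prod.snd hb).trans (map_zero ιC).symm))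
  have ha : ιA a = 0 := by simpa [he] using congrArg Prod.fst hb
  rw [hιA (ha.trans (map_zero ιA).symm), map_zero]

/-- The horseshoe lemma for one step of coresolutions. -/
theorem IsShortExact.exists_isShortExact_prod {A B C QA QC A' C' : ModuleCat.{u} R}
    {i : A →ₗ[R] B} {p : B →ₗ[R] C} (h : IsShortExact i p) {ιA : A →ₗ[R] QA}
    {πA : QA →ₗ[R] A'} (hA : IsShortExact ιA πA) {ιC : C →ₗ[R] QC} {πC : QC →ₗ[R] C'}
    (hC : IsShortExact ιC πC) (e : B →ₗ[R] QA) (he : ∀ a, e (i a) = ιA a) :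
    ∃ (B' : ModuleCat.{u} R) (q : ModuleCat.of R (QA × QC) →ₗ[R] B') (i' : A' →ₗ[R] B')
      (p' : B' →ₗ[R] C'), IsShortExact (e.prod (ιC ∘ₗ p)) q ∧ IsShortExact i' p' := by
  let k : B →ₗ[R] ModuleCat.of R (QA × QC) := e.prod (ιC ∘ₗ p)
  have hk_i (a : A) : k (i a) = (ιA a, 0) := by
    simp [k, he, h.apply_apply]
  have hk_zero {b : B} (hb : ιC (p b) = 0) : ∃ a, i a = b :=
    (h.exact b).mp (hC.injective (hb.trans (map_zero ιC).symm))
  have hq := isShortExact_mkQ k (h.injective_prod hA.injective hC.injective he)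
  let q : ModuleCat.of R (QA × QC) →ₗ[R] ModuleCat.of R (_ ⧸ range k) := (range k).mkQ
  obtain ⟨i', hi'⟩ := hA.exists_desc (q ∘ₗ LinearMap.inl R QA QC) (by
    ext a
    simp [q, ← hk_i])
  have hi'_apply (x : QA) : i' (πA x) = Submodule.Quotient.mk (x, 0) := LinearMap.congr_fun hi' x
  obtain ⟨p', hp'⟩ := hq.exists_desc (πC ∘ₗ LinearMap.snd R QA QC) (by
    ext b
    simp [k, hC.apply_apply])
  have hp'_apply (z : QA × QC) : p' (Submodule.Quotient.mk z) = πC z.2 :=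
    LinearMap.congr_fun hp' z
  refine ⟨_, q, i', p', hq, (injective_iff_map_eq_zero i').mpr fun z hz => ?_, fun c => ?_,
    fun z => ?_⟩
  · obtain ⟨x, rfl⟩ := hA.surjective z
    obtain ⟨b, hb⟩ := (Submodule.Quotient.mk_eq_zero _).mp ((hi'_apply x).symm.trans hz)
    obtain ⟨a, rfl⟩ := hk_zero (congrArg Prod.snd hb)
    have hx : ιA a = x := congrArg Prod.fst ((hk_i a).symm.trans hb)
    rw [← hx, hA.apply_apply]
  · obtain ⟨y, rfl⟩ := hC.surjective c
    exact ⟨q (0, y), hp'_apply _⟩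
  · obtain ⟨⟨x, y⟩, rfl⟩ := Submodule.Quotient.mk_surjective _ z
    rw [hp'_apply]
    refine ⟨fun hy => ?_, ?_⟩
    · obtain ⟨c, rfl⟩ := (hC.exact y).mp hy
      obtain ⟨b, rfl⟩ := h.surjective c
      refine ⟨πA (x - e b), ?_⟩
      rw [hi'_apply, ← sub_eq_zero, ← Submodule.Quotient.mk_sub, Submodule.Quotient.mk_eq_zero]
      exact ⟨-b, by simp [k]⟩
    · rintro ⟨w, hw⟩
      obtain ⟨x', rfl⟩ := hA.surjective w
      simpa [hi'_apply, hp'_apply] using (congrArg p' hw).symm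

theorem IsShortExact.exists_isShortExact_quotient {A B C Q B' : ModuleCat.{u} R} {i : A →ₗ[R] B}
    {p : B →ₗ[R] C} (h : IsShortExact i p) {ι : B →ₗ[R] Q} {π : Q →ₗ[R] B'}
    (h' : IsShortExact ι π) :
    ∃ (α : C →ₗ[R] ModuleCat.of R (Q ⧸ range (ι ∘ₗ i)))
      (β : ModuleCat.of R (Q ⧸ range (ι ∘ₗ i)) →ₗ[R] B'), IsShortExact α β := by
  have hq := isShortExact_mkQ (ι ∘ₗ i) (h'.injective.comp h.injective)
  obtain ⟨α, hα⟩ := h.exists_desc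
    ((range (ι ∘ₗ i)).mkQ ∘ₗ ι : B →ₗ[R] ModuleCat.of R (Q ⧸ range (ι ∘ₗ i))) (by ext a; simp)
  have hα_apply (b : B) : α (p b) = Submodule.Quotient.mk (ι b) := LinearMap.congr_fun hα b
  obtain ⟨β, hβ⟩ := hq.exists_desc π (by ext a; simp [h'.apply_apply])
  have hβ_apply (x : Q) : β (Submodule.Quotient.mk x) = π x := LinearMap.congr_fun hβ x
  refine ⟨α, β, (injective_iff_map_eq_zero α).mpr fun c hc => ?_, fun b' => ?_, fun z => ?_⟩
  · obtain ⟨b, rfl⟩ := h.surjective c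
    obtain ⟨a, ha⟩ := (Submodule.Quotient.mk_eq_zero _).mp ((hα_apply b).symm.trans hc)
    rw [← h'.injective ha, h.apply_apply]
  · obtain ⟨x, rfl⟩ := h'.surjective b'
    exact ⟨_, hβ_apply x⟩
  · obtain ⟨x, rfl⟩ := Submodule.Quotient.mk_surjective _ z
    rw [hβ_apply]
    refine ⟨fun hx => ?_, ?_⟩
    · obtain ⟨b, rfl⟩ := (h'.exact x).mp hx
      exact ⟨p b, hα_apply b⟩
    · rintro ⟨c, hc⟩
      obtain ⟨b, rfl⟩ := h.surjective c
      rw [← hβ_apply, ← hc, hα_apply, hβ_apply, h'.apply_apply]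

structure CoresolutionStep (S : ModuleCat.{u} R) where
  Q : ModuleCat.{u} R
  next : ModuleCat.{u} R
  ι : S →ₗ[R] Q
  π : Q →ₗ[R] next
  projective : Module.Projective R Q
  isShortExact : IsShortExact ι π

/-- Iterating the steps provided here gives every member of `𝒮` a coresolution
`0 → S → Q⁰ → Q¹ → ⋯` by projectives, all of whose cosyzygies lie in `𝒮`. -/
def CoresolutionClosed (𝒳 𝒮 : ModuleCat.{u} R → Prop) : Prop :=
  ∀ S, 𝒮 S → (∀ Y, 𝒳 Y → ExtOneVanishes S Y) ∧ ∃ c : CoresolutionStep S, 𝒮 c.next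

/-- The intrinsic description of `𝒳`-Gorenstein projective modules, see
`xGorensteinProjective_iff_isGP`. -/
def IsGP (𝒳 : ModuleCat.{u} R → Prop) (G : ModuleCat.{u} R) : Prop :=
  (∀ Y, 𝒳 Y → ExtVanishes G Y) ∧ ∃ 𝒮, CoresolutionClosed 𝒳 𝒮 ∧ 𝒮 G

namespace IsGP

variable {𝒳 : ModuleCat.{u} R → Prop}

theorem of_projective (G : ModuleCat.{u} R) [Module.Projective R G] : IsGP 𝒳 G := by
  refine ⟨fun _ _ => .of_projective, fun S => Module.Projective R S, fun S hS => ?_, ‹_›⟩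
  exact ⟨fun _ _ => .of_projective, ⟨S, ModuleCat.of R PUnit, (LinearEquiv.refl R S).toLinearMap,
    0, hS, isShortExact_zero_of_equiv _⟩, inferInstanceAs (Module.Projective R PUnit.{u + 1})⟩

theorem of_isShortExact (h𝒳 : ∀ P : ModuleCat.{u} R, Module.Projective R P → 𝒳 P)
    {A B C : ModuleCat.{u} R} {i : A →ₗ[R] B} {p : B →ₗ[R] C} (hip : IsShortExact i p)
    (hA : IsGP 𝒳 A) (hC : IsGP 𝒳 C) : IsGP 𝒳 B := by
  obtain ⟨hA, 𝒮A, hclA, hA'⟩ := hA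
  obtain ⟨hC, 𝒮C, hclC, hC'⟩ := hC
  refine ⟨fun Y hY => .of_isShortExact hip (hA Y hY) (hC Y hY), fun X => ∃ (A' C' : ModuleCat.{u} R)
    (i : A' →ₗ[R] X) (p : X →ₗ[R] C'), IsShortExact i p ∧ 𝒮A A' ∧ 𝒮C C', ?_,
    A, C, i, p, hip, hA', hC'⟩
  rintro X ⟨A', C', i, p, hip, hA', hC'⟩
  obtain ⟨hA'ext, cA, hcA⟩ := hclA A' hA'
  obtain ⟨hC'ext, cC, hcC⟩ := hclC C' hC'
  obtain ⟨e, he⟩ := hC'ext cA.Q (h𝒳 _ cA.projective) i p hip cA.ι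
  obtain ⟨X', q, i', p', hq, hip'⟩ :=
    hip.exists_isShortExact_prod cA.isShortExact cC.isShortExact e (LinearMap.congr_fun he)
  have := cA.projective
  have := cC.projective
  exact ⟨fun Y hY => .of_isShortExact hip (hA'ext Y hY) (hC'ext Y hY),
    ⟨_, X', _, q, inferInstanceAs (Module.Projective R (cA.Q × cC.Q)), hq⟩,
    cA.next, cC.next, i', p', hip', hcA, hcC⟩

theorem of_isShortExact_left (h𝒳 : ∀ P : ModuleCat.{u} R, Module.Projective R P → 𝒳 P)
    {A B C : ModuleCat.{u} R} {i : A →ₗ[R] B} {p : B →ₗ[R] C} (hip : IsShortExact i p)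
    (hB : IsGP 𝒳 B) (hC : IsGP 𝒳 C) : IsGP 𝒳 A := by
  obtain ⟨hBext, 𝒮B, hclB, hB'⟩ := hB
  obtain ⟨-, cB, hcB⟩ := hclB B hB'
  have := cB.projective
  have hcB_GP : IsGP 𝒳 cB.next :=
    ⟨fun Y hY => .of_kernel cB.isShortExact (hBext Y hY) ((hclB _ hcB).1 Y hY), 𝒮B, hclB, hcB⟩
  obtain ⟨α, β, hαβ⟩ := hip.exists_isShortExact_quotient cB.isShortExact
  obtain ⟨-, 𝒮D, hclD, hD⟩ := of_isShortExact h𝒳 hαβ hC hcB_GP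
  have hAext (Y) (hY : 𝒳 Y) : ExtVanishes A Y := .of_isShortExact_left hip (hBext Y hY) (hC.1 Y hY)
  refine ⟨hAext, fun X => X = A ∨ 𝒮D X, ?_, .inl rfl⟩
  rintro X (rfl | hX)
  · exact ⟨fun Y hY => (hAext Y hY).extOneVanishes, ⟨cB.Q, _, cB.ι ∘ₗ i, _, cB.projective,
      isShortExact_mkQ _ (cB.isShortExact.injective.comp hip.injective)⟩, .inr hD⟩
  · obtain ⟨hext, c, hc⟩ := hclD X hX
    exact ⟨hext, c, .inr hc⟩

end IsGP

section Splice

variable {𝒳 : ModuleCat.{u} R → Prop} {Z P : ℤ → ModuleCat.{u} R} {j : ∀ n, Z n →ₗ[R] P n}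
  {q : ∀ n, P n →ₗ[R] Z (n + 1)}

def XCompleteResolution.splice (hses : ∀ n, IsShortExact (j n) (q n))
    (hP : ∀ n, Module.Projective R (P n)) (hZ : ∀ n Y, 𝒳 Y → ExtOneVanishes (Z n) Y) :
    XCompleteResolution R 𝒳 where
  P := P
  d n := j (n + 1) ∘ₗ q n
  projective := hP
  exact n := (hses (n + 1 + 1)).injective.comp_exact_iff_exact.mpr
    ((hses n).surjective.comp_exact_iff_exact.mpr (hses (n + 1)).exact)
  homExact Y hY n f := by
    refine ⟨fun hf => ?_, ?_⟩
    · have hfj : f ∘ₗ j (n + 1) = 0 := by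
        ext z
        obtain ⟨x, rfl⟩ := (hses n).surjective z
        exact LinearMap.congr_fun hf x
      obtain ⟨h, hh⟩ := (hses (n + 1)).exists_desc f hfj
      obtain ⟨g, hg⟩ := hZ (n + 1 + 1 + 1) Y hY _ _ (hses (n + 1 + 1)) h
      exact ⟨g, by dsimp only; rw [← LinearMap.comp_assoc, hg, hh]⟩
    · rintro ⟨g, rfl⟩
      ext x
      simp [(hses (n + 1)).apply_apply]

theorem xGorensteinProjective_of_splice (hses : ∀ n, IsShortExact (j n) (q n))
    (hP : ∀ n, Module.Projective R (P n)) (hZ : ∀ n Y, 𝒳 Y → ExtOneVanishes (Z n) Y) :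
    XGorensteinProjective R 𝒳 (Z 0) := by
  refine ⟨.splice hses hP hZ, ⟨(LinearEquiv.ofInjective _ (hses 0).injective).trans
    (LinearEquiv.ofEq _ _ ?_)⟩⟩
  show range (j 0) = ker (j (0 + 1) ∘ₗ q 0)
  rw [LinearMap.ker_comp_of_ker_eq_bot _ (LinearMap.ker_eq_bot.mpr (hses (0 + 1)).injective),
    (hses 0).exact.linearMap_ker_eq]

end Splice

namespace CoresolutionClosed

variable {𝒳 𝒮 : ModuleCat.{u} R → Prop} (hcl : CoresolutionClosed 𝒳 𝒮)

noncomputable def step (S : {S // 𝒮 S}) : CoresolutionStep S.1 :=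
  Classical.choose (hcl S.1 S.2).2

noncomputable def cosyzygy (S : {S // 𝒮 S}) : ℕ → {S // 𝒮 S}
  | 0 => S
  | n + 1 => ⟨(hcl.step (cosyzygy S n)).next, Classical.choose_spec (hcl _ (cosyzygy S n).2).2⟩

/-- In degrees `k ≥ 0` the cosyzygies of `G` provided by `hcl`, in degrees `k < 0` its
syzygies. -/
noncomputable def cycles (G : {S // 𝒮 S}) : ℤ → ModuleCat.{u} R
  | .ofNat k => (hcl.cosyzygy G k).1
  | .negSucc k => syzygy G.1 (k + 1)

noncomputable def terms (G : {S // 𝒮 S}) : ℤ → ModuleCat.{u} R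
  | .ofNat k => (hcl.step (hcl.cosyzygy G k)).Q
  | .negSucc k => freeCover (syzygy G.1 k)

noncomputable def cyclesι (G : {S // 𝒮 S}) : ∀ n, hcl.cycles G n →ₗ[R] hcl.terms G n
  | .ofNat k => (hcl.step (hcl.cosyzygy G k)).ι
  | .negSucc k => (ker (freeCover.π (syzygy G.1 k))).subtype

noncomputable def termsπ (G : {S // 𝒮 S}) : ∀ n, hcl.terms G n →ₗ[R] hcl.cycles G (n + 1)
  | .ofNat k => (hcl.step (hcl.cosyzygy G k)).π
  | .negSucc 0 => freeCover.π (syzygy G.1 0)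
  | .negSucc (k + 1) => freeCover.π (syzygy G.1 (k + 1))

theorem isShortExact (G : {S // 𝒮 S}) : ∀ n, IsShortExact (hcl.cyclesι G n) (hcl.termsπ G n)
  | .ofNat _ => (hcl.step _).isShortExact
  | .negSucc 0 => isShortExact_syzygy G.1 0
  | .negSucc (k + 1) => isShortExact_syzygy G.1 (k + 1)

theorem projective_terms (G : {S // 𝒮 S}) : ∀ n, Module.Projective R (hcl.terms G n)
  | .ofNat _ => (hcl.step _).projective
  | .negSucc _ => inferInstanceAs (Module.Projective R (freeCover _))

theorem extOneVanishes_cycles (G : {S // 𝒮 S}) (hG : ∀ Y, 𝒳 Y → ExtVanishes G.1 Y) :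
    ∀ n Y, 𝒳 Y → ExtOneVanishes (hcl.cycles G n) Y
  | .ofNat k, Y, hY => (hcl _ (hcl.cosyzygy G k).2).1 Y hY
  | .negSucc k, Y, hY => hG Y hY (k + 1) _ (resWithKernel_syzygy G.1 (k + 1))

end CoresolutionClosed

theorem IsGP.xGorensteinProjective {𝒳 : ModuleCat.{u} R → Prop} {G : ModuleCat.{u} R}
    (h : IsGP 𝒳 G) : XGorensteinProjective R 𝒳 G := by
  obtain ⟨hG, 𝒮, hcl, hG'⟩ := h
  exact xGorensteinProjective_of_splice (hcl.isShortExact ⟨G, hG'⟩)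
    (hcl.projective_terms ⟨G, hG'⟩) (hcl.extOneVanishes_cycles ⟨G, hG'⟩ hG)

namespace XCompleteResolution

variable {𝒳 : ModuleCat.{u} R → Prop} (C : XCompleteResolution R 𝒳)

def cycles (n : ℤ) : ModuleCat.{u} R := ModuleCat.of R (ker (C.d n))

def toCycles (n : ℤ) : C.P n →ₗ[R] C.cycles (n + 1) :=
  (C.d n).codRestrict _ fun x => (C.exact n).apply_apply_eq_zero x

theorem isShortExact_cycles (n : ℤ) :
    IsShortExact (A := C.cycles n) (ker (C.d n)).subtype (C.toCycles n) := by
  refine ⟨Subtype.val_injective, fun ⟨z, hz⟩ => ?_, fun x => ?_⟩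
  · obtain ⟨x, hx⟩ := (C.exact n z).mp hz
    exact ⟨x, Subtype.ext hx⟩
  · exact Subtype.ext_iff.trans (LinearMap.exact_subtype_ker_map (C.d n) x)

theorem extOneVanishes_cycles {Y : ModuleCat.{u} R} (hY : 𝒳 Y) (n : ℤ) :
    ExtOneVanishes (C.cycles n) Y := by
  obtain ⟨k, rfl⟩ : ∃ k, n = k + 1 + 1 + 1 := ⟨n - 3, by ring⟩
  have := C.projective (k + 1 + 1)
  refine .of_isShortExact_of_forall_extend (C.isShortExact_cycles (k + 1 + 1)) .of_projective
    fun φ => ?_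
  obtain ⟨g, hg⟩ := (C.homExact Y hY k (φ ∘ₗ C.toCycles (k + 1))).mp (by
    ext x
    simp [show C.toCycles (k + 1) (C.d k x) = 0 from
      Subtype.ext ((C.exact k).apply_apply_eq_zero x)])
  refine ⟨g, LinearMap.ext fun z => ?_⟩
  obtain ⟨x, rfl⟩ := (C.isShortExact_cycles (k + 1)).surjective z
  exact LinearMap.congr_fun hg x

theorem resWithKernel_cycles (k : ℕ) (m : ℤ) :
    ResWithKernel R IsProjective k (C.cycles m) (C.cycles (m + k)) := by
  induction k generalizing m with
  | zero => rw [Nat.cast_zero, add_zero]; exact ⟨.refl R _⟩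
  | succ k ih =>
    rw [show m + ↑(k + 1) = m + 1 + k by push_cast; ring]
    exact (ih (m + 1)).snoc (C.isShortExact_cycles m) (C.projective m)

theorem extVanishes_cycles {Y : ModuleCat.{u} R} (hY : 𝒳 Y) (n : ℤ) :
    ExtVanishes (C.cycles n) Y := by
  intro k K hK
  have h := C.resWithKernel_cycles k (n - k)
  rw [sub_add_cancel] at h
  exact (ExtOneVanishes.iff_of_resWithKernel h hK).mp (C.extOneVanishes_cycles hY _)

end XCompleteResolution

theorem XGorensteinProjective.isGP {𝒳 : ModuleCat.{u} R → Prop} {G : ModuleCat.{u} R}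
    (h : XGorensteinProjective R 𝒳 G) : IsGP 𝒳 G := by
  obtain ⟨C, ⟨e⟩⟩ := h
  refine ⟨fun Y hY => (C.extVanishes_cycles hY 0).of_equiv e.symm,
    fun S => ∃ n, Nonempty (S ≃ₗ[R] C.cycles n), ?_, 0, ⟨e⟩⟩
  rintro S ⟨n, ⟨e⟩⟩
  exact ⟨fun Y hY => (C.extOneVanishes_cycles hY n).of_equiv e.symm,
    ⟨C.P n, _, _, _, C.projective n, (C.isShortExact_cycles n).comp_equiv_left e⟩,
    n + 1, ⟨.refl R _⟩⟩

theorem xGorensteinProjective_iff_isGP {𝒳 : ModuleCat.{u} R → Prop} {G : ModuleCat.{u} R} :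
    XGorensteinProjective R 𝒳 G ↔ IsGP 𝒳 G :=
  ⟨XGorensteinProjective.isGP, IsGP.xGorensteinProjective⟩

theorem isResolving_xGorensteinProjective {𝒳 : ModuleCat.{u} R → Prop}
    (h𝒳 : ∀ P : ModuleCat.{u} R, Module.Projective R P → 𝒳 P) :
    IsResolving (XGorensteinProjective R 𝒳) where
  projective P _ := xGorensteinProjective_iff_isGP.mpr (.of_projective P)
  iff_of_isShortExact hip hC := by
    simp only [xGorensteinProjective_iff_isGP] at hC ⊢
    exact ⟨fun hA => .of_isShortExact h𝒳 hip hA hC, fun hB => .of_isShortExact_left h𝒳 hip hB hC⟩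

end

/-- If `0 → K → G_{n-1} → ⋯ → G_0 → M → 0` and `0 → K' → G'_{n-1} → ⋯ → G'_0 → M → 0`
are exact with all `G_i`, `G'_i` `𝒳`-Gorenstein projective, then `K` is
`𝒳`-Gorenstein projective iff `K'` is. -/
theorem xGorensteinProjective_kernel_iff
    (R : Type u) [Ring R] (𝒳 : ModuleCat.{u} R → Prop)
    (h𝒳 : ∀ P : ModuleCat.{u} R, Module.Projective R P → 𝒳 P)
    (n : ℕ) (M K K' : ModuleCat.{u} R)
    (h : ResWithKernel R (XGorensteinProjective R 𝒳) n K M)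
    (h' : ResWithKernel R (XGorensteinProjective R 𝒳) n K' M) :
    XGorensteinProjective R 𝒳 K ↔ XGorensteinProjective R 𝒳 K' :=
  (isResolving_xGorensteinProjective h𝒳).kernel_iff h h'
end
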